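/- arXiv:math/0204059 — 6 statements merged into one kernel-verified Lean document; each statement's English description precedes it below -/
import Mathlib

section
/- Every finite-dimensional representation X of a finite quiver Q possesses a unique Harder-Narasimhan filtration: a filtration 0 = X_0 ⊂ X_1 ⊂ … ⊂ X_s = X such that each quotient X_k/X_{k-1} is semistable and μ(X_1/X_0) > μ(X_2/X_1) > … > μ(X_s/X_{s-1}). -/
/-- A finite-dimensional representation of the quiver with vertex set `I`,
arrow set `Ar`, and source/target maps `st`, `tg`, over the field `k`. -/
structure QRep (k : Type*) [Field k] {I : Type*} {Ar : Type*} (st tg : Ar → I) where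
  V : I → Type*
  [addgrp : ∀ i, AddCommGroup (V i)]
  [mod : ∀ i, Module k (V i)]
  [fd : ∀ i, FiniteDimensional k (V i)]
  f : ∀ a, V (st a) →ₗ[k] V (tg a)

attribute [instance] QRep.addgrp QRep.mod QRep.fd

variable {k : Type*} [Field k] {I : Type*} {Ar : Type*} {st tg : Ar → I}

/-- A family of submodules is a subrepresentation if it is stable under all
the structure maps. -/
def IsSubrep (X : QRep k st tg) (U : ∀ i, Submodule k (X.V i)) : Prop :=
  ∀ a, (U (st a)).map (X.f a) ≤ U (tg a)

variable [Fintype I]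

/-- The slope `μ(d) = Θ(d)/dim(d)` of a dimension vector. -/
def slopeVec (Θ : I → ℤ) (d : I → ℕ) : ℚ :=
  (∑ i, (Θ i : ℚ) * d i) / (∑ i, (d i : ℚ))

/-- The dimension vector of a family of submodules. -/
noncomputable def dimv (X : QRep k st tg) (U : ∀ i, Submodule k (X.V i)) : I → ℕ :=
  fun i => Module.finrank k (U i)

/-- The subquotient `U/W` (for `W ≤ U` subrepresentations of `X`) is
semistable: it is nonzero, and every nonzero subrepresentation `T` with
`W ≤ T ≤ U` (these correspond to the subrepresentations of `U/W`) has
`μ(T/W) ≤ μ(U/W)`. -/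
def PairSemistable (Θ : I → ℤ) (X : QRep k st tg)
    (W U : ∀ i, Submodule k (X.V i)) : Prop :=
  W ≠ U ∧
  ∀ T, IsSubrep X T → (∀ i, W i ≤ T i) → (∀ i, T i ≤ U i) → T ≠ W →
    slopeVec Θ (fun i => Module.finrank k (T i) - Module.finrank k (W i)) ≤
    slopeVec Θ (fun i => Module.finrank k (U i) - Module.finrank k (W i))

/-- A representation is semistable if every nonzero subrepresentation `U`
satisfies `μ(U) ≤ μ(X)`. -/
def Semistable (Θ : I → ℤ) (X : QRep k st tg) : Prop :=
  PairSemistable Θ X (fun _ => ⊥) (fun _ => ⊤)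

/-- A representation is stable if it is nonzero and every nonzero proper
subrepresentation `U` satisfies `μ(U) < μ(X)`. -/
def Stable (Θ : I → ℤ) (X : QRep k st tg) : Prop :=
  (∃ i, Module.finrank k (X.V i) ≠ 0) ∧
  ∀ U, IsSubrep X U → U ≠ (fun _ => ⊥) → U ≠ (fun _ => ⊤) →
    slopeVec Θ (dimv X U) < slopeVec Θ (fun i => Module.finrank k (X.V i))

/-- `F` (a chain of subrepresentations of `X`, indexed by `ℕ` and constant
from `s` on) is a Harder-Narasimhan filtration of length `s` of `X`:
`0 = F 0 ⊂ F 1 ⊂ … ⊂ F s = X` with semistable subquotients of strictly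
decreasing slopes. -/
def IsHNFiltration (Θ : I → ℤ) (X : QRep k st tg) (s : ℕ)
    (F : ℕ → ∀ i, Submodule k (X.V i)) : Prop :=
  (∀ n, IsSubrep X (F n)) ∧
  (∀ n i, F n i ≤ F (n + 1) i) ∧
  (F 0 = fun _ => ⊥) ∧
  (F s = fun _ => ⊤) ∧
  (∀ n, s ≤ n → F n = F s) ∧
  (∀ n, n < s → F n ≠ F (n + 1)) ∧
  (∀ n, n < s → PairSemistable Θ X (F n) (F (n + 1))) ∧
  (∀ n, n + 1 < s →
    slopeVec Θ (fun i => Module.finrank k (F (n + 1) i) - Module.finrank k (F n i)) >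
    slopeVec Θ (fun i => Module.finrank k (F (n + 2) i) - Module.finrank k (F (n + 1) i)))

section HN

variable (Θ : I → ℤ) (X : QRep k st tg)

/-- Total Θ-weight of a family of submodules. -/
noncomputable def th (U : ∀ i, Submodule k (X.V i)) : ℚ :=
  ∑ i, (Θ i : ℚ) * (Module.finrank k (U i) : ℚ)

/-- Total dimension (rational). -/
noncomputable def dt (U : ∀ i, Submodule k (X.V i)) : ℚ :=
  ∑ i, (Module.finrank k (U i) : ℚ)

/-- Total dimension (natural number). -/
noncomputable def dtn (U : ∀ i, Submodule k (X.V i)) : ℕ :=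
  ∑ i, Module.finrank k (U i)

/-- Slope of the subquotient `U/W`. -/
noncomputable def sl (W U : ∀ i, Submodule k (X.V i)) : ℚ :=
  (th Θ X U - th Θ X W) / (dt X U - dt X W)

lemma slope_sub {W U : ∀ i, Submodule k (X.V i)} (h : ∀ i, W i ≤ U i) :
    slopeVec Θ (fun i => Module.finrank k (U i) - Module.finrank k (W i)) = sl Θ X W U := by
  unfold slopeVec sl th dt
  rw [← Finset.sum_sub_distrib, ← Finset.sum_sub_distrib]
  congr 1
  · apply Finset.sum_congr rfl; intro i _
    rw [Nat.cast_sub (Submodule.finrank_mono (h i))]; ring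
  · apply Finset.sum_congr rfl; intro i _
    rw [Nat.cast_sub (Submodule.finrank_mono (h i))]

lemma dtn_lt {W U : ∀ i, Submodule k (X.V i)} (hle : ∀ i, W i ≤ U i) (hne : W ≠ U) :
    dtn X W < dtn X U := by
  have : ∃ i, W i ≠ U i := by
    by_contra h; push_neg at h; exact hne (funext h)
  obtain ⟨i, hi⟩ := this
  exact Finset.sum_lt_sum (fun j _ => Submodule.finrank_mono (hle j))
    ⟨i, Finset.mem_univ i, Submodule.finrank_lt_finrank_of_lt (lt_of_le_of_ne (hle i) hi)⟩

lemma dt_lt {W U : ∀ i, Submodule k (X.V i)} (hle : ∀ i, W i ≤ U i) (hne : W ≠ U) :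
    dt X W < dt X U := by
  have h := dtn_lt X hle hne
  have e : ∀ T : ∀ i, Submodule k (X.V i), dt X T = (dtn X T : ℚ) := by
    intro T; simp [dt, dtn]
  rw [e, e]; exact_mod_cast h

lemma dt_sub_pos {W U : ∀ i, Submodule k (X.V i)} (hle : ∀ i, W i ≤ U i) (hne : W ≠ U) :
    0 < dt X U - dt X W := sub_pos.mpr (dt_lt X hle hne)

lemma dtn_le_top (U : ∀ i, Submodule k (X.V i)) :
    dtn X U ≤ ∑ i, Module.finrank k (X.V i) :=
  Finset.sum_le_sum fun i _ => Submodule.finrank_le (U i)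

lemma eq_top_of_dtn {W : ∀ i, Submodule k (X.V i)}
    (h : ∑ i, Module.finrank k (X.V i) ≤ dtn X W) : W = fun _ => ⊤ := by
  by_contra hne
  have := dtn_lt X (U := fun _ => (⊤ : Submodule k (X.V _))) (fun i => le_top) hne
  have h2 : dtn X (fun _ => ⊤) ≤ ∑ i, Module.finrank k (X.V i) := dtn_le_top X _
  omega

/- Mediant inequalities. -/
lemma avg_le {a1 a2 b1 b2 c : ℚ} (hb1 : 0 < b1) (hb2 : 0 < b2)
    (h1 : a1 / b1 ≤ c) (h2 : a2 / b2 ≤ c) : (a1 + a2) / (b1 + b2) ≤ c := by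
  rw [div_le_iff₀ hb1] at h1
  rw [div_le_iff₀ hb2] at h2
  rw [div_le_iff₀ (by linarith)]
  nlinarith

lemma avg_lt {a1 a2 b1 b2 c : ℚ} (hb1 : 0 < b1) (hb2 : 0 < b2)
    (h1 : a1 / b1 ≤ c) (h2 : a2 / b2 < c) : (a1 + a2) / (b1 + b2) < c := by
  rw [div_le_iff₀ hb1] at h1
  rw [div_lt_iff₀ hb2] at h2
  rw [div_lt_iff₀ (by linarith)]
  nlinarith

lemma le_avg {a1 a2 b1 b2 c : ℚ} (hb1 : 0 < b1) (hb2 : 0 < b2)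
    (h1 : c ≤ a1 / b1) (h2 : c ≤ a2 / b2) : c ≤ (a1 + a2) / (b1 + b2) := by
  rw [le_div_iff₀ hb1] at h1
  rw [le_div_iff₀ hb2] at h2
  rw [le_div_iff₀ (by linarith)]
  nlinarith

lemma isSubrep_top : IsSubrep X (fun _ => ⊤) := fun _ => le_top

lemma isSubrep_bot : IsSubrep X (fun _ => ⊥) := fun a => by
  rw [Submodule.map_bot]

lemma isSubrep_sup {U W : ∀ i, Submodule k (X.V i)} (hU : IsSubrep X U) (hW : IsSubrep X W) :
    IsSubrep X (fun i => U i ⊔ W i) := fun a => by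
  rw [Submodule.map_sup]; exact sup_le_sup (hU a) (hW a)

lemma isSubrep_inf {U W : ∀ i, Submodule k (X.V i)} (hU : IsSubrep X U) (hW : IsSubrep X W) :
    IsSubrep X (fun i => U i ⊓ W i) := fun a =>
  le_trans (Submodule.map_inf_le _) (inf_le_inf (hU a) (hW a))

lemma exists_max_of_finite {s : Set ℚ} (hfin : s.Finite) (hne : s.Nonempty) :
    ∃ m ∈ s, ∀ q ∈ s, q ≤ m := by
  obtain ⟨m, hm, hmax⟩ := Set.Finite.exists_maximalFor id s hfin hne
  refine ⟨m, hm, fun q hq => ?_⟩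
  by_contra h
  push_neg at h
  exact absurd (hmax hq h.le) (not_le.mpr h)

lemma finite_of_dims (f : (I → ℕ) → ℚ) (P : (∀ i, Submodule k (X.V i)) → Prop) :
    {q : ℚ | ∃ U, P U ∧ f (fun i => Module.finrank k (U i)) = q}.Finite := by
  apply Set.Finite.subset
    ((Set.Finite.pi fun i => Set.finite_Iic (Module.finrank k (X.V i))).image f)
  rintro q ⟨U, _, rfl⟩
  exact ⟨fun i => Module.finrank k (U i),
    fun i _ => Set.mem_Iic.mpr (Submodule.finrank_le (U i)), rfl⟩

/-- The specification of the greedy step: `U` is a subrepresentation strictly containing `W`,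
maximizing the slope of `U/W`, and of maximal dimension among such. -/
def gSpec (W U : ∀ i, Submodule k (X.V i)) : Prop :=
  IsSubrep X U ∧ (∀ i, W i ≤ U i) ∧ U ≠ W ∧
  (∀ T, IsSubrep X T → (∀ i, W i ≤ T i) → T ≠ W → sl Θ X W T ≤ sl Θ X W U) ∧
  (∀ T, IsSubrep X T → (∀ i, W i ≤ T i) → T ≠ W → sl Θ X W T = sl Θ X W U →
    dtn X T ≤ dtn X U)

lemma exists_gSpec {W : ∀ i, Submodule k (X.V i)} (hW : IsSubrep X W)
    (hWt : W ≠ (fun _ => ⊤)) : ∃ U, gSpec Θ X W U := by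
  classical
  set P : (∀ i, Submodule k (X.V i)) → Prop :=
    fun U => IsSubrep X U ∧ (∀ i, W i ≤ U i) ∧ U ≠ W with hP
  have hPtop : P (fun _ => ⊤) := ⟨isSubrep_top X, fun i => le_top, fun hh => hWt hh.symm⟩
  have hSfin : {q : ℚ | ∃ U, P U ∧ sl Θ X W U = q}.Finite := by
    have := finite_of_dims X
      (fun d : I → ℕ => ((∑ i, (Θ i : ℚ) * d i) - th Θ X W) / ((∑ i, (d i : ℚ)) - dt X W)) P
    convert this using 3
    exact Iff.rfl
  have hSne : {q : ℚ | ∃ U, P U ∧ sl Θ X W U = q}.Nonempty := ⟨_, _, hPtop, rfl⟩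
  obtain ⟨m, ⟨U0, hU0, hU0m⟩, hmmax⟩ := exists_max_of_finite hSfin hSne
  have hDfin : {q : ℚ | ∃ U, (P U ∧ sl Θ X W U = m) ∧ ((dtn X U : ℚ)) = q}.Finite := by
    have := finite_of_dims X (fun d : I → ℕ => ∑ i, (d i : ℚ))
      (fun U => P U ∧ sl Θ X W U = m)
    convert this using 3
    simp [dtn]
  have hDne : {q : ℚ | ∃ U, (P U ∧ sl Θ X W U = m) ∧ ((dtn X U : ℚ)) = q}.Nonempty :=
    ⟨_, U0, ⟨hU0, hU0m⟩, rfl⟩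
  obtain ⟨m2, ⟨U, ⟨hPU, hslU⟩, hdU⟩, hm2max⟩ := exists_max_of_finite hDfin hDne
  refine ⟨U, hPU.1, hPU.2.1, hPU.2.2, ?_, ?_⟩
  · intro T hT hWT hTW
    rw [hslU]
    exact hmmax _ ⟨T, ⟨hT, hWT, hTW⟩, rfl⟩
  · intro T hT hWT hTW heq
    have h1 : (dtn X T : ℚ) ≤ m2 :=
      hm2max _ ⟨T, ⟨⟨hT, hWT, hTW⟩, by rw [heq, hslU]⟩, rfl⟩
    rw [← hdU] at h1
    exact_mod_cast h1

lemma gSpec_strict {W U T : ∀ i, Submodule k (X.V i)} (h : gSpec Θ X W U)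
    (hT : IsSubrep X T) (hUT : ∀ i, U i ≤ T i) (hne : T ≠ U) :
    sl Θ X U T < sl Θ X W U := by
  obtain ⟨hUs, hWU, hUW, hmax, hdmax⟩ := h
  by_contra hc
  push_neg at hc
  have hWT : ∀ i, W i ≤ T i := fun i => le_trans (hWU i) (hUT i)
  have hTW : T ≠ W := by
    rintro rfl
    exact hUW (funext fun i => le_antisymm (hUT i) (hWU i))
  have b1 : 0 < dt X U - dt X W := dt_sub_pos X hWU (Ne.symm hUW)
  have b2 : 0 < dt X T - dt X U := dt_sub_pos X hUT (Ne.symm hne)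
  have key : sl Θ X W U ≤ sl Θ X W T := by
    have e : sl Θ X W T =
        ((th Θ X U - th Θ X W) + (th Θ X T - th Θ X U)) /
        ((dt X U - dt X W) + (dt X T - dt X U)) := by
      unfold sl; congr 1 <;> ring
    rw [e]
    exact le_avg b1 b2 le_rfl hc
  have heq : sl Θ X W T = sl Θ X W U := le_antisymm (hmax T hT hWT hTW) key
  have h1 := hdmax T hT hWT hTW heq
  have h2 := dtn_lt X hUT (Ne.symm hne)
  omega

open Classical in
noncomputable def gfun (W : ∀ i, Submodule k (X.V i)) : ∀ i, Submodule k (X.V i) :=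
  if h : IsSubrep X W ∧ W ≠ (fun _ => ⊤) then (exists_gSpec Θ X h.1 h.2).choose else W

lemma gfun_spec {W : ∀ i, Submodule k (X.V i)} (hW : IsSubrep X W)
    (hWt : W ≠ (fun _ => ⊤)) : gSpec Θ X W (gfun Θ X W) := by
  unfold gfun
  rw [dif_pos ⟨hW, hWt⟩]
  exact (exists_gSpec Θ X hW hWt).choose_spec

lemma gfun_top {W : ∀ i, Submodule k (X.V i)} (h : W = fun _ => ⊤) : gfun Θ X W = W := by
  unfold gfun
  rw [dif_neg]
  rintro ⟨-, h2⟩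
  exact h2 h

noncomputable def Fseq (W : ∀ i, Submodule k (X.V i)) : ℕ → ∀ i, Submodule k (X.V i)
  | 0 => W
  | n + 1 => gfun Θ X (Fseq W n)

lemma Fseq_subrep {W : ∀ i, Submodule k (X.V i)} (hW : IsSubrep X W) (n : ℕ) :
    IsSubrep X (Fseq Θ X W n) := by
  induction n with
  | zero => exact hW
  | succ n ih =>
    show IsSubrep X (gfun Θ X (Fseq Θ X W n))
    by_cases h : Fseq Θ X W n = fun _ => ⊤
    · rw [gfun_top Θ X h]; exact ih
    · exact (gfun_spec Θ X ih h).1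

lemma Fseq_le {W : ∀ i, Submodule k (X.V i)} (hW : IsSubrep X W) (n : ℕ) (i : I) :
    Fseq Θ X W n i ≤ Fseq Θ X W (n + 1) i := by
  show Fseq Θ X W n i ≤ gfun Θ X (Fseq Θ X W n) i
  by_cases h : Fseq Θ X W n = fun _ => ⊤
  · rw [gfun_top Θ X h]
  · exact (gfun_spec Θ X (Fseq_subrep Θ X hW n) h).2.1 i

lemma Fseq_exists_top {W : ∀ i, Submodule k (X.V i)} (hW : IsSubrep X W) :
    ∃ n, Fseq Θ X W n = fun _ => ⊤ := by
  by_contra h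
  push_neg at h
  have grow : ∀ n, dtn X W + n ≤ dtn X (Fseq Θ X W n) := by
    intro n
    induction n with
    | zero => simp [Fseq]
    | succ n ih =>
      have hs := gfun_spec Θ X (Fseq_subrep Θ X hW n) (h n)
      have := dtn_lt X hs.2.1 (Ne.symm hs.2.2.1)
      have : dtn X (Fseq Θ X W n) < dtn X (Fseq Θ X W (n+1)) := this
      omega
  have h1 := grow (∑ i, Module.finrank k (X.V i) + 1)
  have h2 := dtn_le_top X (Fseq Θ X W (∑ i, Module.finrank k (X.V i) + 1))
  omega

/-- Harder–Narasimhan filtration starting at a given subrepresentation `W`. -/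
def HNF (W : ∀ i, Submodule k (X.V i)) (s : ℕ)
    (F : ℕ → ∀ i, Submodule k (X.V i)) : Prop :=
  (∀ n, IsSubrep X (F n)) ∧
  (∀ n i, F n i ≤ F (n + 1) i) ∧
  (F 0 = W) ∧
  (F s = fun _ => ⊤) ∧
  (∀ n, s ≤ n → F n = F s) ∧
  (∀ n, n < s → F n ≠ F (n + 1)) ∧
  (∀ n, n < s → PairSemistable Θ X (F n) (F (n + 1))) ∧
  (∀ n, n + 1 < s →
    slopeVec Θ (fun i => Module.finrank k (F (n + 1) i) - Module.finrank k (F n i)) >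
    slopeVec Θ (fun i => Module.finrank k (F (n + 2) i) - Module.finrank k (F (n + 1) i)))

lemma exists_HNF {W : ∀ i, Submodule k (X.V i)} (hW : IsSubrep X W) :
    ∃ s F, HNF Θ X W s F := by
  have htop := Fseq_exists_top Θ X hW
  classical
  set s := Nat.find htop with hs
  set F := Fseq Θ X W with hF
  have hstop : F s = fun _ => ⊤ := Nat.find_spec htop
  have hnot : ∀ n, n < s → F n ≠ fun _ => ⊤ := fun n hn => Nat.find_min htop hn
  have hspec : ∀ n, n < s → gSpec Θ X (F n) (F (n + 1)) := fun n hn =>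
    gfun_spec Θ X (Fseq_subrep Θ X hW n) (hnot n hn)
  have hstab : ∀ n, s ≤ n → F n = F s := by
    intro n hn
    induction n with
    | zero =>
      have : s = 0 := by omega
      rw [this]
    | succ n ih =>
      rcases Nat.lt_or_ge s (n + 1) with h | h
      · have hns : s ≤ n := by omega
        have e : F n = F s := ih hns
        show gfun Θ X (F n) = F s
        rw [e, gfun_top Θ X hstop]
      · have : s = n + 1 := by omega
        rw [this]
  refine ⟨s, F, Fseq_subrep Θ X hW, Fseq_le Θ X hW, rfl, hstop, hstab, ?_, ?_, ?_⟩
  · intro n hn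
    exact Ne.symm (hspec n hn).2.2.1
  · intro n hn
    refine ⟨Ne.symm (hspec n hn).2.2.1, fun T hT hle hleU hne => ?_⟩
    rw [slope_sub Θ X hle, slope_sub Θ X (hspec n hn).2.1]
    exact (hspec n hn).2.2.2.1 T hT hle hne
  · intro n hn
    have h1 := hspec n (by omega)
    have h2 := hspec (n + 1) hn
    have := gSpec_strict Θ X h1 h2.1 h2.2.1 h2.2.2.1
    rw [slope_sub Θ X h1.2.1, slope_sub Θ X h2.2.1]
    exact this

lemma Fmono {F : ℕ → ∀ i, Submodule k (X.V i)}
    (hmono : ∀ n i, F n i ≤ F (n + 1) i) :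
    ∀ m n, m ≤ n → ∀ i, F m i ≤ F n i := by
  intro m n hmn
  induction n with
  | zero => intro i; have : m = 0 := by omega
            rw [this]
  | succ n ih =>
    rcases Nat.lt_or_ge m (n + 1) with h | h
    · exact fun i => le_trans (ih (by omega) i) (hmono n i)
    · have : m = n + 1 := by omega
      rw [this]; exact fun i => le_rfl

lemma slope_chain {W : ∀ i, Submodule k (X.V i)} {s : ℕ}
    {F : ℕ → ∀ i, Submodule k (X.V i)} (h : HNF Θ X W s F) :
    ∀ m, 0 < m → m < s → sl Θ X (F m) (F (m + 1)) < sl Θ X (F 0) (F 1) := by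
  obtain ⟨-, hmono, -, -, -, -, -, hdec⟩ := h
  intro m
  induction m with
  | zero => omega
  | succ p ih =>
    intro _ hms
    have hdec' := hdec p (by omega)
    rw [slope_sub Θ X (hmono p), slope_sub Θ X (hmono (p + 1))] at hdec'
    rcases Nat.eq_zero_or_pos p with hp | hp
    · subst hp; exact hdec'
    · exact lt_trans hdec' (ih hp (by omega))

lemma lemmaA {W : ∀ i, Submodule k (X.V i)} {s : ℕ}
    {F : ℕ → ∀ i, Submodule k (X.V i)} (h : HNF Θ X W s F) :
    ∀ j U, IsSubrep X U → (∀ i, W i ≤ U i) → U ≠ W → (∀ i, U i ≤ F j i) →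
      sl Θ X W U ≤ sl Θ X W (F 1) ∧
      (sl Θ X W U = sl Θ X W (F 1) → ∀ i, U i ≤ F 1 i) := by
  have hchain := slope_chain Θ X h
  obtain ⟨hsub, hmono, h0, hs, hstab, hstrict, hss, hdec⟩ := h
  intro j
  induction j with
  | zero =>
    intro U _ hWU hUW hle
    rw [h0] at hle
    exact absurd (funext fun i => le_antisymm (hle i) (hWU i)) hUW
  | succ j ih =>
    intro U hU hWU hUW hle
    rcases Nat.lt_or_ge j s with hsj | hsj
    swap
    · -- s ≤ j : F (j+1) = F j
      have e1 : F (j + 1) = F s := hstab (j + 1) (by omega)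
      have e2 : F j = F s := hstab j hsj
      refine ih U hU hWU hUW ?_
      rw [e2, ← e1]; exact hle
    by_cases hUj : ∀ i, U i ≤ F j i
    · exact ih U hU hWU hUW hUj
    push_neg at hUj
    obtain ⟨i0, hi0⟩ := hUj
    set A : ∀ i, Submodule k (X.V i) := fun i => U i ⊓ F j i with hAdef
    set B : ∀ i, Submodule k (X.V i) := fun i => U i ⊔ F j i with hBdef
    have hA : IsSubrep X A := isSubrep_inf X hU (hsub j)
    have hB : IsSubrep X B := isSubrep_sup X hU (hsub j)
    have hAU : ∀ i, A i ≤ U i := fun i => inf_le_left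
    have hWFj : ∀ i, W i ≤ F j i := by
      intro i
      have := Fmono X hmono 0 j (by omega) i
      rwa [h0] at this
    have hWA : ∀ i, W i ≤ A i := fun i => le_inf (hWU i) (hWFj i)
    have hANU : A ≠ U := by
      intro hh
      exact hi0 (le_trans (le_of_eq (congrFun hh i0).symm) inf_le_right)
    have hBNF : B ≠ F j := by
      intro hh
      exact hi0 (le_trans le_sup_left (le_of_eq (congrFun hh i0)))
    have hFjB : ∀ i, F j i ≤ B i := fun i => le_sup_right
    have hBle : ∀ i, B i ≤ F (j + 1) i := fun i => sup_le (hle i) (hmono j i)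
    have hsemi := (hss j hsj).2 B hB hFjB hBle hBNF
    rw [slope_sub Θ X hFjB, slope_sub Θ X (hmono j)] at hsemi
    have hkey : ∀ i, (Module.finrank k (B i) : ℚ) + Module.finrank k (A i)
        = Module.finrank k (U i) + Module.finrank k (F j i) := by
      intro i
      exact_mod_cast Submodule.finrank_sup_add_finrank_inf_eq (U i) (F j i)
    have hthB : th Θ X B - th Θ X (F j) = th Θ X U - th Θ X A := by
      unfold th
      rw [← Finset.sum_sub_distrib, ← Finset.sum_sub_distrib]
      apply Finset.sum_congr rfl
      intro i _
      linear_combination (Θ i : ℚ) * hkey i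
    have hdtB : dt X B - dt X (F j) = dt X U - dt X A := by
      unfold dt
      rw [← Finset.sum_sub_distrib, ← Finset.sum_sub_distrib]
      apply Finset.sum_congr rfl
      intro i _
      linear_combination hkey i
    have hq : (th Θ X U - th Θ X A) / (dt X U - dt X A) ≤ sl Θ X (F j) (F (j + 1)) := by
      have e : sl Θ X (F j) B = (th Θ X U - th Θ X A) / (dt X U - dt X A) := by
        unfold sl
        rw [hthB, hdtB]
      rwa [e] at hsemi
    rcases Nat.eq_zero_or_pos j with hj0 | hj0
    · -- j = 0 : A = W
      subst hj0
      have hAW : A = W := by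
        funext i
        refine le_antisymm ?_ (hWA i)
        have : A i ≤ F 0 i := inf_le_right
        rwa [h0] at this
      rw [hAW] at hq
      rw [h0] at hq
      constructor
      · exact hq
      · intro _ i
        exact le_trans le_sup_left (hBle i)
    · -- j ≥ 1
      have hc1 : sl Θ X (F j) (F (j + 1)) < sl Θ X W (F 1) := by
        have := hchain j hj0 hsj
        rwa [h0] at this
      by_cases hAW : A = W
      · rw [hAW] at hq
        have hlt : sl Θ X W U < sl Θ X W (F 1) := lt_of_le_of_lt hq hc1
        exact ⟨hlt.le, fun heq => (hlt.ne heq).elim⟩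
      · have ihA := ih A hA hWA hAW (fun i => inf_le_right)
        have b1 : 0 < dt X A - dt X W := dt_sub_pos X hWA (Ne.symm hAW)
        have b2 : 0 < dt X U - dt X A := dt_sub_pos X hAU hANU
        have hslU : sl Θ X W U =
            ((th Θ X A - th Θ X W) + (th Θ X U - th Θ X A)) /
            ((dt X A - dt X W) + (dt X U - dt X A)) := by
          unfold sl; congr 1 <;> ring
        have hlt : sl Θ X W U < sl Θ X W (F 1) := by
          rw [hslU]
          exact avg_lt b1 b2 ihA.1 (lt_of_le_of_lt hq hc1)
        exact ⟨hlt.le, fun heq => (hlt.ne heq).elim⟩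

lemma first_eq {W : ∀ i, Submodule k (X.V i)} {s t : ℕ}
    {F G : ℕ → ∀ i, Submodule k (X.V i)} (hF : HNF Θ X W s F) (hG : HNF Θ X W t G)
    (hs : 0 < s) (ht : 0 < t) : F 1 = G 1 := by
  have hF1s : IsSubrep X (F 1) := hF.1 1
  have hG1s : IsSubrep X (G 1) := hG.1 1
  have hWF1 : ∀ i, W i ≤ F 1 i := by
    intro i; have := hF.2.1 0 i; rwa [hF.2.2.1] at this
  have hWG1 : ∀ i, W i ≤ G 1 i := by
    intro i; have := hG.2.1 0 i; rwa [hG.2.2.1] at this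
  have hF1W : F 1 ≠ W := by
    have := hF.2.2.2.2.2.1 0 hs
    rw [hF.2.2.1] at this
    exact Ne.symm this
  have hG1W : G 1 ≠ W := by
    have := hG.2.2.2.2.2.1 0 ht
    rw [hG.2.2.1] at this
    exact Ne.symm this
  have hF1top : ∀ i, F 1 i ≤ G t i := by
    intro i; rw [hG.2.2.2.1]; exact le_top
  have hG1top : ∀ i, G 1 i ≤ F s i := by
    intro i; rw [hF.2.2.2.1]; exact le_top
  have hAG := lemmaA Θ X hG t (F 1) hF1s hWF1 hF1W hF1top
  have hAF := lemmaA Θ X hF s (G 1) hG1s hWG1 hG1W hG1top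
  have heq : sl Θ X W (F 1) = sl Θ X W (G 1) := le_antisymm hAG.1 hAF.1
  funext i
  exact le_antisymm (hAG.2 heq i) (hAF.2 heq.symm i)

lemma HNF_top {W : ∀ i, Submodule k (X.V i)} {s : ℕ}
    {F : ℕ → ∀ i, Submodule k (X.V i)} (h : HNF Θ X W s F) (hW : W = fun _ => ⊤) :
    s = 0 ∧ ∀ n, F n = W := by
  obtain ⟨-, hmono, h0, hs, hstab, hstrict, -, -⟩ := h
  have hs0 : s = 0 := by
    by_contra hne
    have h01 := hstrict 0 (by omega)
    apply h01
    funext i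
    refine le_antisymm (hmono 0 i) ?_
    rw [h0, hW]
    exact le_top
  constructor
  · exact hs0
  · intro n
    have := hstab n (by omega)
    rw [this, hs0, h0]

lemma unique_HNF : ∀ (m : ℕ) (W : ∀ i, Submodule k (X.V i)) (s : ℕ)
    (F : ℕ → ∀ i, Submodule k (X.V i)) (t : ℕ) (G : ℕ → ∀ i, Submodule k (X.V i)),
    HNF Θ X W s F → HNF Θ X W t G →
    (∑ i, Module.finrank k (X.V i)) ≤ dtn X W + m → s = t ∧ ∀ n, F n = G n := by
  intro m
  induction m with
  | zero =>
    intro W s F t G hF hG hb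
    have hWtop : W = fun _ => ⊤ := eq_top_of_dtn X (by omega)
    obtain ⟨hs0, hFn⟩ := HNF_top Θ X hF hWtop
    obtain ⟨ht0, hGn⟩ := HNF_top Θ X hG hWtop
    exact ⟨by omega, fun n => by rw [hFn n, hGn n]⟩
  | succ m ih =>
    intro W s F t G hF hG hb
    by_cases hWtop : W = fun _ => ⊤
    · obtain ⟨hs0, hFn⟩ := HNF_top Θ X hF hWtop
      obtain ⟨ht0, hGn⟩ := HNF_top Θ X hG hWtop
      exact ⟨by omega, fun n => by rw [hFn n, hGn n]⟩
    · have hs : 0 < s := by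
        rcases Nat.eq_zero_or_pos s with h | h
        · exfalso; apply hWtop
          have h4 := hF.2.2.2.1
          rw [h] at h4
          rw [← hF.2.2.1]; exact h4
        · exact h
      have ht : 0 < t := by
        rcases Nat.eq_zero_or_pos t with h | h
        · exfalso; apply hWtop
          have h4 := hG.2.2.2.1
          rw [h] at h4
          rw [← hG.2.2.1]; exact h4
        · exact h
      have h1 := first_eq Θ X hF hG hs ht
      have hF' : HNF Θ X (F 1) (s - 1) (fun n => F (n + 1)) := by
        obtain ⟨a1, a2, a3, a4, a5, a6, a7, a8⟩ := hF
        refine ⟨fun n => a1 (n + 1), fun n i => a2 (n + 1) i, rfl, ?_, ?_, ?_, ?_, ?_⟩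
        · show F (s - 1 + 1) = fun _ => ⊤
          rw [show s - 1 + 1 = s by omega]; exact a4
        · intro n hn
          show F (n + 1) = F (s - 1 + 1)
          rw [show s - 1 + 1 = s by omega]
          rw [a5 (n + 1) (by omega), a5 s (by omega)]
        · intro n hn; exact a6 (n + 1) (by omega)
        · intro n hn; exact a7 (n + 1) (by omega)
        · intro n hn; exact a8 (n + 1) (by omega)
      have hG' : HNF Θ X (F 1) (t - 1) (fun n => G (n + 1)) := by
        rw [h1]
        obtain ⟨a1, a2, a3, a4, a5, a6, a7, a8⟩ := hG
        refine ⟨fun n => a1 (n + 1), fun n i => a2 (n + 1) i, rfl, ?_, ?_, ?_, ?_, ?_⟩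
        · show G (t - 1 + 1) = fun _ => ⊤
          rw [show t - 1 + 1 = t by omega]; exact a4
        · intro n hn
          show G (n + 1) = G (t - 1 + 1)
          rw [show t - 1 + 1 = t by omega]
          rw [a5 (n + 1) (by omega), a5 t (by omega)]
        · intro n hn; exact a6 (n + 1) (by omega)
        · intro n hn; exact a7 (n + 1) (by omega)
        · intro n hn; exact a8 (n + 1) (by omega)
      have hWF1 : ∀ i, W i ≤ F 1 i := by
        intro i; have := hF.2.1 0 i; rwa [hF.2.2.1] at this
      have hF1W : F 1 ≠ W := by
        have := hF.2.2.2.2.2.1 0 hs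
        rw [hF.2.2.1] at this
        exact Ne.symm this
      have hb' : (∑ i, Module.finrank k (X.V i)) ≤ dtn X (F 1) + m := by
        have := dtn_lt X hWF1 (Ne.symm hF1W)
        omega
      obtain ⟨hst, hFG⟩ := ih (F 1) (s - 1) _ (t - 1) _ hF' hG' hb'
      refine ⟨by omega, fun n => ?_⟩
      cases n with
      | zero => rw [hF.2.2.1, hG.2.2.1]
      | succ n => exact hFG n

end HN

/-- Every finite-dimensional representation of a finite quiver possesses a
unique Harder-Narasimhan filtration. -/
theorem stmt5 (Θ : I → ℤ) (X : QRep k st tg) :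
    ∃! sF : ℕ × (ℕ → ∀ i, Submodule k (X.V i)),
      IsHNFiltration Θ X sF.1 sF.2 := by
  obtain ⟨s, F, hF⟩ := exists_HNF Θ X (isSubrep_bot X)
  refine ⟨(s, F), hF, ?_⟩
  rintro ⟨t, G⟩ hG
  have hG' : HNF Θ X (fun _ => ⊥) t G := hG
  obtain ⟨hst, hFG⟩ := unique_HNF Θ X (∑ i, Module.finrank k (X.V i))
    (fun _ => ⊥) t G s F hG' hF (by omega)
  exact Prod.ext hst (funext hFG)
end

section
/- For a representation X, among all nonzero subrepresentations of X of maximal slope, there is a unique one of maximal dimension, and it contains every subrepresentation of maximal slope. -/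
variable {k : Type*} [Field k] {I : Type*} {Ar : Type*} {st tg : Ar → I}

variable [Fintype I]

/-- For a nonzero representation `X`, among all nonzero subrepresentations of
`X` of maximal slope there is a unique one of maximal dimension (the maximal
destabilizing subrepresentation), and it contains every subrepresentation of
maximal slope. -/
theorem stmt6 (Θ : I → ℤ) (X : QRep k st tg)
    (hX : ∃ i, Module.finrank k (X.V i) ≠ 0) :
    ∃! U : ∀ i, Submodule k (X.V i),
      IsSubrep X U ∧ U ≠ (fun _ => ⊥) ∧
      (∀ T, IsSubrep X T → T ≠ (fun _ => ⊥) →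
        slopeVec Θ (dimv X T) ≤ slopeVec Θ (dimv X U)) ∧
      (∀ T, IsSubrep X T → T ≠ (fun _ => ⊥) →
        slopeVec Θ (dimv X T) = slopeVec Θ (dimv X U) → ∀ i, T i ≤ U i) := by
  classical
  -- abbreviations
  set μ : (∀ i, Submodule k (X.V i)) → ℚ := fun T => slopeVec Θ (dimv X T) with hμdef
  let tot : (∀ i, Submodule k (X.V i)) → ℕ := fun T => ∑ i, Module.finrank k (T i)
  let th : (∀ i, Submodule k (X.V i)) → ℚ :=
    fun T => ∑ i, (Θ i : ℚ) * (Module.finrank k (T i) : ℚ)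
  have hμeq : ∀ T, μ T = th T / (tot T : ℚ) := by
    intro T
    simp only [hμdef, slopeVec, dimv, th, tot]
    push_cast
    rfl
  have htotpos : ∀ T : ∀ i, Submodule k (X.V i), T ≠ (fun _ => ⊥) → 0 < tot T := by
    intro T hT
    have : ∃ i, T i ≠ ⊥ := by
      by_contra h
      push_neg at h
      exact hT (funext h)
    obtain ⟨i, hi⟩ := this
    have : Module.finrank k (T i) ≠ 0 := fun h => hi (Submodule.finrank_eq_zero.mp h)
    exact Finset.sum_pos' (fun j _ => Nat.zero_le _)
      ⟨i, Finset.mem_univ i, Nat.pos_of_ne_zero this⟩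
  have hne_of_le : ∀ (T S : ∀ i, Submodule k (X.V i)), T ≠ (fun _ => ⊥) →
      (∀ i, T i ≤ S i) → S ≠ (fun _ => ⊥) := by
    intro T S hT hle hS
    apply hT
    funext i
    have := hle i
    rw [show S = (fun _ => ⊥) from hS] at this
    exact le_bot_iff.mp this
  have hth : ∀ T : ∀ i, Submodule k (X.V i), T ≠ (fun _ => ⊥) →
      th T = μ T * (tot T : ℚ) := by
    intro T hT
    have h0 : ((tot T : ℚ)) ≠ 0 := by exact_mod_cast (htotpos T hT).ne'
    rw [hμeq, div_mul_cancel₀ _ h0]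
  -- the set of achieved slopes is finite
  have hPfin : {q : ℚ | ∃ T, IsSubrep X T ∧ T ≠ (fun _ => ⊥) ∧ μ T = q}.Finite := by
    have h1 : {d : I → ℕ | ∀ i, d i ≤ Module.finrank k (X.V i)}.Finite :=
      Set.Finite.pi' (fun i => Set.finite_Iic _)
    apply Set.Finite.subset (h1.image (slopeVec Θ))
    rintro q ⟨T, _, _, rfl⟩
    exact ⟨dimv X T, fun i => Submodule.finrank_le _, rfl⟩
  have htopsub : IsSubrep X (fun _ => (⊤ : Submodule k (X.V _))) := fun a => le_top
  have htopne : (fun i => (⊤ : Submodule k (X.V i))) ≠ (fun _ => ⊥) := by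
    obtain ⟨i, hi⟩ := hX
    intro h
    have := congrFun h i
    exact hi (by rw [← finrank_top k (X.V i), this, finrank_bot k _])
  have hPne : {q : ℚ | ∃ T, IsSubrep X T ∧ T ≠ (fun _ => ⊥) ∧ μ T = q}.Nonempty :=
    ⟨_, _, htopsub, htopne, rfl⟩
  obtain ⟨μmax, hμmaxP, hmaxwrt⟩ :=
    Set.Finite.exists_maximalFor id _ hPfin hPne
  have hmax : ∀ T, IsSubrep X T → T ≠ (fun _ => ⊥) → μ T ≤ μmax := by
    intro T h1 h2
    by_contra h
    push_neg at h
    exact absurd (hmaxwrt ⟨T, h1, h2, rfl⟩ h.le) (not_le.mpr h)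
  -- take a maximal-slope subrep of maximal total dimension
  set N : Set ℕ := {n | ∃ T, IsSubrep X T ∧ T ≠ (fun _ => ⊥) ∧ μ T = μmax ∧ tot T = n} with hN
  have hNne : N.Nonempty := by
    obtain ⟨T, h1, h2, h3⟩ := hμmaxP
    exact ⟨tot T, T, h1, h2, h3, rfl⟩
  have hNbdd : BddAbove N := by
    refine ⟨∑ i, Module.finrank k (X.V i), ?_⟩
    rintro n ⟨T, _, _, _, rfl⟩
    exact Finset.sum_le_sum fun i _ => Submodule.finrank_le _
  obtain ⟨U, hUsub, hUne, hUμ, hUtot⟩ := Nat.sSup_mem hNne hNbdd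
  have hUmax : ∀ n ∈ N, n ≤ tot U := by
    intro n hn
    rw [hUtot]
    exact le_csSup hNbdd hn
  -- key: every max-slope subrep is contained in U
  have hkey : ∀ T, IsSubrep X T → T ≠ (fun _ => ⊥) → μ T = μmax → ∀ i, T i ≤ U i := by
    intro T hTsub hTne hTμ i
    set S : ∀ i, Submodule k (X.V i) := fun i => U i ⊔ T i with hSdef
    set W : ∀ i, Submodule k (X.V i) := fun i => U i ⊓ T i with hWdef
    have hSsub : IsSubrep X S := by
      intro a
      rw [hSdef]
      simp only [Submodule.map_sup]
      exact sup_le_sup (hUsub a) (hTsub a)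
    have hWsub : IsSubrep X W := by
      intro a
      exact le_trans (Submodule.map_inf_le _) (inf_le_inf (hUsub a) (hTsub a))
    have hUleS : ∀ j, U j ≤ S j := fun j => le_sup_left
    have hSne : S ≠ (fun _ => ⊥) := hne_of_le U S hUne hUleS
    -- additivity
    have hadd : ∀ j, Module.finrank k (S j) + Module.finrank k (W j)
        = Module.finrank k (U j) + Module.finrank k (T j) := fun j =>
      Submodule.finrank_sup_add_finrank_inf_eq (U j) (T j)
    have htotadd : (tot S : ℚ) + (tot W : ℚ) = (tot U : ℚ) + (tot T : ℚ) := by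
      have : tot S + tot W = tot U + tot T := by
        simp only [tot, ← Finset.sum_add_distrib]
        exact Finset.sum_congr rfl fun j _ => hadd j
      exact_mod_cast congrArg (fun n : ℕ => (n : ℚ)) this
    have hthadd : th S + th W = th U + th T := by
      simp only [th, ← Finset.sum_add_distrib]
      refine Finset.sum_congr rfl fun j _ => ?_
      have hc : ((Module.finrank k (S j) : ℚ) + Module.finrank k (W j))
          = (Module.finrank k (U j) : ℚ) + Module.finrank k (T j) := by exact_mod_cast hadd j
      rw [← mul_add, ← mul_add, hc]
    -- θ(W) ≤ μmax · dim(W)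
    have hW : th W ≤ μmax * (tot W : ℚ) := by
      by_cases hWz : tot W = 0
      · have hz : ∀ j, Module.finrank k (W j) = 0 := fun j =>
          (Finset.sum_eq_zero_iff.mp hWz) j (Finset.mem_univ j)
        have hthW : th W = 0 := Finset.sum_eq_zero fun j _ => by rw [hz j]; simp
        rw [hthW, hWz]
        simp
      · have hWne : W ≠ (fun _ => ⊥) := by
          intro h
          apply hWz
          simp only [tot, h]
          simp [finrank_bot k _]
        have h1 := hmax W hWsub hWne
        have h2 := hth W hWne
        have h3 : (0 : ℚ) < tot W := by exact_mod_cast htotpos W hWne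
        nlinarith [mul_nonneg (sub_nonneg.mpr h1) h3.le]
    have hthU : th U = μmax * (tot U : ℚ) := by rw [hth U hUne, hUμ]
    have hthT : th T = μmax * (tot T : ℚ) := by rw [hth T hTne, hTμ]
    have htotUpos : (0 : ℚ) < tot U := by exact_mod_cast htotpos U hUne
    have htotSU : (tot U : ℚ) ≤ (tot S : ℚ) := by
      have : tot U ≤ tot S :=
        Finset.sum_le_sum fun j _ => Submodule.finrank_mono (hUleS j)
      exact_mod_cast this
    have h4 : μmax * (tot S : ℚ) + μmax * (tot W : ℚ)
        = μmax * (tot U : ℚ) + μmax * (tot T : ℚ) := by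
      rw [← mul_add, ← mul_add, htotadd]
    have hthS : μmax * (tot S : ℚ) ≤ th S := by linarith
    -- μ(S) = μmax
    have hμS : μ S = μmax := by
      have h1 := hmax S hSsub hSne
      have h2 := hth S hSne
      have h3 : (0 : ℚ) < tot S := lt_of_lt_of_le htotUpos htotSU
      have h5 : μmax ≤ μ S := le_of_mul_le_mul_right (by linarith) h3
      linarith
    -- maximality of dimension forces S = U
    have htotSle : tot S ≤ tot U := hUmax (tot S) ⟨S, hSsub, hSne, hμS, rfl⟩
    have htoteq : tot S = tot U := le_antisymm htotSle (by exact_mod_cast htotSU)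
    have heq : ∀ j, Module.finrank k (U j) = Module.finrank k (S j) :=
      fun j => (Finset.sum_eq_sum_iff_of_le
        (fun j _ => Submodule.finrank_mono (hUleS j))).mp htoteq.symm j (Finset.mem_univ j)
    have : U i = S i :=
      Submodule.eq_of_le_of_finrank_le (hUleS i) (heq i).ge
    rw [show U i = S i from this]
    exact le_sup_right
  refine ⟨U, ⟨hUsub, hUne, ?_, ?_⟩, ?_⟩
  · intro T h1 h2
    exact (hmax T h1 h2).trans hUμ.ge
  · intro T h1 h2 h3
    exact hkey T h1 h2 ((show μ T = μ U from h3).trans hUμ)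
  · rintro U' ⟨h1, h2, h3, h4⟩
    have ha : μ U ≤ μ U' := h3 U hUsub hUne
    have hb : μ U' ≤ μmax := hmax U' h1 h2
    have hμU' : μ U' = μmax := le_antisymm hb (hUμ.symm.trans_le ha)
    funext i
    exact le_antisymm (hkey U' h1 h2 hμU' i)
      (h4 U hUsub hUne (show μ U = μ U' from hUμ.trans hμU'.symm) i)
end

section
/- Let d* = (d^1, …, d^s) be a tuple of nonzero elements of N^I. The collection A(d*) of d*-admissible subsets of {1, …, s−1} is a simplicial complex; that is, if I is d*-admissible and J ⊆ I, then J is d*-admissible. -/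
open scoped Classical

/-- The abscissa of the `m`-th vertex of the polygon of the tuple
`(d 0, …, d (s-1))`: the total dimension of `d 0 + … + d (m-1)`. -/
def xCoord {ι : Type*} [Fintype ι] (d : ℕ → ι → ℕ) (m : ℕ) : ℤ :=
  ∑ j ∈ Finset.range m, ∑ i, (d j i : ℤ)

/-- The ordinate of the `m`-th vertex of the polygon: `Θ(d 0 + … + d (m-1))`. -/
def yCoord {ι : Type*} [Fintype ι] (Θ : ι → ℤ) (d : ℕ → ι → ℕ) (m : ℕ) : ℤ :=
  ∑ j ∈ Finset.range m, ∑ i, Θ i * d j i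

/-- `F ⊆ {1, …, s-1}` is an admissible subset for the tuple
`(d 0, …, d (s-1))`: writing `C = F ∪ {0, s}` for the chosen vertex indices,
(a) the coarsening `c_F(d*)` is convex (between consecutive chosen indices the
slopes weakly decrease), and (b) the polygon `P(d*)` lies on or above the
coarsened polygon (each intermediate vertex lies on or above the chord between
the surrounding chosen vertices).  Slope comparisons are written in
cross-multiplied form. -/
def AdmissibleSet {ι : Type*} [Fintype ι] (Θ : ι → ℤ) (d : ℕ → ι → ℕ) (s : ℕ)
    (F : Finset ℕ) : Prop :=
  F ⊆ Finset.Ioo 0 s ∧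
  (∀ a ∈ insert 0 (insert s F), ∀ b ∈ insert 0 (insert s F),
    ∀ c ∈ insert 0 (insert s F), a < b → b < c →
    (∀ m ∈ insert 0 (insert s F), ¬(a < m ∧ m < b)) →
    (∀ m ∈ insert 0 (insert s F), ¬(b < m ∧ m < c)) →
    (yCoord Θ d b - yCoord Θ d a) * (xCoord d c - xCoord d b) ≥
      (yCoord Θ d c - yCoord Θ d b) * (xCoord d b - xCoord d a)) ∧
  (∀ a ∈ insert 0 (insert s F), ∀ b ∈ insert 0 (insert s F), a < b →
    (∀ m ∈ insert 0 (insert s F), ¬(a < m ∧ m < b)) →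
    ∀ m, a < m → m < b →
      (yCoord Θ d m - yCoord Θ d a) * (xCoord d b - xCoord d a) ≥
        (yCoord Θ d b - yCoord Θ d a) * (xCoord d m - xCoord d a))

namespace Stmt7Aux

variable {ι : Type*} [Fintype ι] (Θ : ι → ℤ) (d : ℕ → ι → ℕ)

def D (a m b : ℕ) : ℤ :=
  (yCoord Θ d m - yCoord Θ d a) * (xCoord d b - xCoord d a) -
    (yCoord Θ d b - yCoord Θ d a) * (xCoord d m - xCoord d a)

lemma D_form2 (a m b : ℕ) : D Θ d a m b =
    (yCoord Θ d m - yCoord Θ d a) * (xCoord d b - xCoord d m) -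
      (yCoord Θ d b - yCoord Θ d m) * (xCoord d m - xCoord d a) := by
  simp only [D]; ring

lemma D_form3 (a m b : ℕ) : D Θ d a m b =
    (yCoord Θ d b - yCoord Θ d a) * (xCoord d b - xCoord d m) -
      (yCoord Θ d b - yCoord Θ d m) * (xCoord d b - xCoord d a) := by
  simp only [D]; ring

lemma xCoord_mono {a b : ℕ} (h : a ≤ b) : xCoord d a ≤ xCoord d b := by
  unfold xCoord
  apply Finset.sum_le_sum_of_subset_of_nonneg (by exact Finset.range_subset_range.2 h)
  intro j _ _
  positivity

lemma xCoord_strict {s : ℕ} (hd : ∀ j, j < s → d j ≠ 0) {a b : ℕ}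
    (hab : a < b) (hbs : b ≤ s) : xCoord d a < xCoord d b := by
  have h1 : xCoord d (a + 1) ≤ xCoord d b := xCoord_mono d hab
  have hda : d a ≠ 0 := hd a (lt_of_lt_of_le hab hbs)
  obtain ⟨i, hi⟩ := Function.ne_iff.mp hda
  have h2 : 0 < ∑ i, (d a i : ℤ) := by
    have : (1 : ℤ) ≤ (d a i : ℤ) := by
      have : d a i ≠ 0 := by simpa using hi
      omega
    calc (0:ℤ) < (d a i : ℤ) := by omega
    _ ≤ ∑ i, (d a i : ℤ) := Finset.single_le_sum (f := fun i => (d a i : ℤ))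
        (fun _ _ => by positivity) (Finset.mem_univ i)
  have h3 : xCoord d (a + 1) = xCoord d a + ∑ i, (d a i : ℤ) := by
    unfold xCoord; rw [Finset.sum_range_succ]
  omega

lemma slope_trans {n1 d1 n2 d2 n3 d3 : ℤ} (hd1 : 0 ≤ d1) (hd2 : 0 < d2)
    (hd3 : 0 ≤ d3) (h1 : n1 * d2 ≤ n2 * d1) (h2 : n2 * d3 ≤ n3 * d2) :
    n1 * d3 ≤ n3 * d1 := by
  have A := mul_le_mul_of_nonneg_right h1 hd3
  have B := mul_le_mul_of_nonneg_right h2 hd1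
  have : n1 * d3 * d2 ≤ n3 * d1 * d2 := by nlinarith
  exact le_of_mul_le_mul_right this hd2

section Chain

variable (s : ℕ) (hd : ∀ j, j < s → d j ≠ 0) (C : Finset ℕ)
  (hCs : ∀ c ∈ C, c ≤ s)
  (hconv : ∀ a ∈ C, ∀ b ∈ C, ∀ c ∈ C, a < b → b < c →
    (∀ m ∈ C, ¬(a < m ∧ m < b)) → (∀ m ∈ C, ¬(b < m ∧ m < c)) →
    0 ≤ D Θ d a b c)
  (hchord : ∀ a ∈ C, ∀ b ∈ C, a < b → (∀ m ∈ C, ¬(a < m ∧ m < b)) →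
    ∀ m, a < m → m < b → 0 ≤ D Θ d a m b)

set_option maxHeartbeats 1000000
include s hd hCs hconv hchord
set_option linter.unusedSectionVars false


/-- If `e` is the successor of `a` in `C` and `b ∈ C`, `a < e ≤ b`, then
`e` lies above the chord from `a` to `b`. -/
lemma lemE : ∀ k a b e, a ∈ C → b ∈ C → e ∈ C → a < e → e ≤ b →
    (∀ m ∈ C, ¬(a < m ∧ m < e)) → b - a = k → 0 ≤ D Θ d a e b := by
  intro k
  induction k using Nat.strong_induction_on with
  | _ k ih =>
    intro a b e ha hb he hae heb hgap hk
    rcases eq_or_lt_of_le heb with rfl | heb'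
    · simp only [D]; ring_nf; exact le_refl 0
    · have hbmem : b ∈ C.filter (fun c => e < c) := Finset.mem_filter.2 ⟨hb, heb'⟩
      have hTne : (C.filter (fun c => e < c)).Nonempty := ⟨b, hbmem⟩
      set f := (C.filter (fun c => e < c)).min' hTne with hfdef
      have hfmem := (C.filter (fun c => e < c)).min'_mem hTne
      have hfC : f ∈ C := (Finset.mem_filter.1 hfmem).1
      have hef : e < f := (Finset.mem_filter.1 hfmem).2
      have hfb : f ≤ b := Finset.min'_le _ b hbmem
      have hgap2 : ∀ m ∈ C, ¬(e < m ∧ m < f) := by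
        rintro m hm ⟨h1, h2⟩
        exact absurd (Finset.min'_le (C.filter (fun c => e < c)) m (Finset.mem_filter.2 ⟨hm, h1⟩)) (not_le.2 h2)
      have hIH : 0 ≤ D Θ d e f b :=
        ih (b - e) (by omega) e b f he hb hfC hef hfb hgap2 rfl
      have hcv : 0 ≤ D Θ d a e f := hconv a ha e he f hfC hae hef hgap hgap2
      have hx1 : xCoord d e ≤ xCoord d b := xCoord_mono d (le_of_lt heb')
      have hx3 : xCoord d a ≤ xCoord d e := xCoord_mono d (le_of_lt hae)
      have hx2 : xCoord d e < xCoord d f :=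
        xCoord_strict d hd hef (le_trans hfb (hCs b hb))
      have h1 : (yCoord Θ d b - yCoord Θ d e) * (xCoord d f - xCoord d e) ≤
          (yCoord Θ d f - yCoord Θ d e) * (xCoord d b - xCoord d e) := by
        simp only [D] at hIH; linarith
      have h2 : (yCoord Θ d f - yCoord Θ d e) * (xCoord d e - xCoord d a) ≤
          (yCoord Θ d e - yCoord Θ d a) * (xCoord d f - xCoord d e) := by
        rw [D_form2] at hcv; linarith
      have h3 := slope_trans (by linarith) (by linarith) (by linarith) h1 h2
      rw [D_form2]; linarith

/-- If `p` is the predecessor of `b` in `C` and `a ∈ C`, `a ≤ p < b`, then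
`p` lies above the chord from `a` to `b`. -/
lemma lemE' : ∀ k a b p, a ∈ C → b ∈ C → p ∈ C → a ≤ p → p < b →
    (∀ m ∈ C, ¬(p < m ∧ m < b)) → b - a = k → 0 ≤ D Θ d a p b := by
  intro k
  induction k using Nat.strong_induction_on with
  | _ k ih =>
    intro a b p ha hb hp hap hpb hgap hk
    rcases eq_or_lt_of_le hap with rfl | hap'
    · simp only [D]; ring_nf; exact le_refl 0
    · have hamem : a ∈ C.filter (fun c => c < p) := Finset.mem_filter.2 ⟨ha, hap'⟩
      have hTne : (C.filter (fun c => c < p)).Nonempty := ⟨a, hamem⟩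
      set q := (C.filter (fun c => c < p)).max' hTne with hqdef
      have hqmem := (C.filter (fun c => c < p)).max'_mem hTne
      have hqC : q ∈ C := (Finset.mem_filter.1 hqmem).1
      have hqp : q < p := (Finset.mem_filter.1 hqmem).2
      have haq : a ≤ q := Finset.le_max' _ a hamem
      have hgap2 : ∀ m ∈ C, ¬(q < m ∧ m < p) := by
        rintro m hm ⟨h1, h2⟩
        exact absurd (Finset.le_max' (C.filter (fun c => c < p)) m (Finset.mem_filter.2 ⟨hm, h2⟩)) (not_le.2 h1)
      have hIH : 0 ≤ D Θ d a q p :=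
        ih (p - a) (by omega) a p q ha hp hqC haq hqp hgap2 rfl
      have hcv : 0 ≤ D Θ d q p b := hconv q hqC p hp b hb hqp hpb hgap2 hgap
      have hx1 : xCoord d p ≤ xCoord d b := xCoord_mono d (le_of_lt hpb)
      have hx3 : xCoord d a ≤ xCoord d p := xCoord_mono d (le_of_lt hap')
      have hx2 : xCoord d q < xCoord d p :=
        xCoord_strict d hd hqp (le_trans (le_of_lt hpb) (hCs b hb))
      have h1 : (yCoord Θ d b - yCoord Θ d p) * (xCoord d p - xCoord d q) ≤
          (yCoord Θ d p - yCoord Θ d q) * (xCoord d b - xCoord d p) := by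
        rw [D_form2] at hcv; linarith
      have h2 : (yCoord Θ d p - yCoord Θ d q) * (xCoord d p - xCoord d a) ≤
          (yCoord Θ d p - yCoord Θ d a) * (xCoord d p - xCoord d q) := by
        rw [D_form3] at hIH; linarith
      have h3 := slope_trans (by linarith) (by linarith) (by linarith) h1 h2
      rw [D_form2]; linarith

/-- Any chosen vertex between two chosen vertices lies above their chord. -/
lemma lemA (a c b : ℕ) (ha : a ∈ C) (hc : c ∈ C) (hb : b ∈ C)
    (hac : a < c) (hcb : c < b) : 0 ≤ D Θ d a c b := by
  have hbmem : b ∈ C.filter (fun x => c < x) := Finset.mem_filter.2 ⟨hb, hcb⟩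
  have hTne : (C.filter (fun x => c < x)).Nonempty := ⟨b, hbmem⟩
  set f := (C.filter (fun x => c < x)).min' hTne with hfdef
  have hfmem := (C.filter (fun x => c < x)).min'_mem hTne
  have hfC : f ∈ C := (Finset.mem_filter.1 hfmem).1
  have hcf : c < f := (Finset.mem_filter.1 hfmem).2
  have hfb : f ≤ b := Finset.min'_le _ b hbmem
  have hgapcf : ∀ m ∈ C, ¬(c < m ∧ m < f) := by
    rintro m hm ⟨h1, h2⟩
    exact absurd (Finset.min'_le (C.filter (fun x => c < x)) m (Finset.mem_filter.2 ⟨hm, h1⟩)) (not_le.2 h2)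
  have hamem : a ∈ C.filter (fun x => x < c) := Finset.mem_filter.2 ⟨ha, hac⟩
  have hPne : (C.filter (fun x => x < c)).Nonempty := ⟨a, hamem⟩
  set p := (C.filter (fun x => x < c)).max' hPne with hpdef
  have hpmem := (C.filter (fun x => x < c)).max'_mem hPne
  have hpC : p ∈ C := (Finset.mem_filter.1 hpmem).1
  have hpc : p < c := (Finset.mem_filter.1 hpmem).2
  have hap : a ≤ p := Finset.le_max' _ a hamem
  have hgappc : ∀ m ∈ C, ¬(p < m ∧ m < c) := by
    rintro m hm ⟨h1, h2⟩
    exact absurd (Finset.le_max' (C.filter (fun x => x < c)) m (Finset.mem_filter.2 ⟨hm, h2⟩)) (not_le.2 h1)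
  have hE : 0 ≤ D Θ d c f b :=
    lemE Θ d s hd C hCs hconv hchord (b - c) c b f hc hb hfC hcf hfb hgapcf rfl
  have hE' : 0 ≤ D Θ d a p c :=
    lemE' Θ d s hd C hCs hconv hchord (c - a) a c p ha hc hpC hap hpc hgappc rfl
  have hcv : 0 ≤ D Θ d p c f := hconv p hpC c hc f hfC hpc hcf hgappc hgapcf
  have hbs : b ≤ s := hCs b hb
  have hxcb : xCoord d c ≤ xCoord d b := xCoord_mono d (le_of_lt hcb)
  have hxac : xCoord d a ≤ xCoord d c := xCoord_mono d (le_of_lt hac)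
  have hxcf : xCoord d c < xCoord d f := xCoord_strict d hd hcf (le_trans hfb hbs)
  have hxpc : xCoord d p < xCoord d c :=
    xCoord_strict d hd hpc (le_trans (le_of_lt hcb) hbs)
  -- step 1: sl(c,b) ≤ sl(p,c)
  have h1 : (yCoord Θ d b - yCoord Θ d c) * (xCoord d f - xCoord d c) ≤
      (yCoord Θ d f - yCoord Θ d c) * (xCoord d b - xCoord d c) := by
    simp only [D] at hE; linarith
  have h2 : (yCoord Θ d f - yCoord Θ d c) * (xCoord d c - xCoord d p) ≤
      (yCoord Θ d c - yCoord Θ d p) * (xCoord d f - xCoord d c) := by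
    rw [D_form2] at hcv; linarith
  have hstep1 := slope_trans (by linarith) (by linarith) (by linarith) h1 h2
  -- step 2: sl(c,b) ≤ sl(a,c)
  have h4 : (yCoord Θ d c - yCoord Θ d p) * (xCoord d c - xCoord d a) ≤
      (yCoord Θ d c - yCoord Θ d a) * (xCoord d c - xCoord d p) := by
    rw [D_form3] at hE'; linarith
  have hstep2 := slope_trans (by linarith) (by linarith) (by linarith) hstep1 h4
  rw [D_form2]; linarith

/-- Main lemma: every intermediate point lies above the chord between any two
chosen vertices. -/
lemma lemP1 : ∀ k a b, a ∈ C → b ∈ C → a < b → b - a = k →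
    ∀ m, a < m → m < b → 0 ≤ D Θ d a m b := by
  intro k
  induction k using Nat.strong_induction_on with
  | _ k ih =>
    intro a b ha hb hab hk m ham hmb
    by_cases hS : (C.filter (fun c => a < c ∧ c < b)).Nonempty
    · obtain ⟨c, hcmem⟩ := hS
      have hcC : c ∈ C := (Finset.mem_filter.1 hcmem).1
      have hac : a < c := (Finset.mem_filter.1 hcmem).2.1
      have hcb : c < b := (Finset.mem_filter.1 hcmem).2.2
      have hA : 0 ≤ D Θ d a c b := lemA Θ d s hd C hCs hconv hchord a c b ha hcC hb hac hcb
      have hbs : b ≤ s := hCs b hb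
      rcases lt_trichotomy m c with hmc | rfl | hcm
      · have hIH : 0 ≤ D Θ d a m c :=
          ih (c - a) (by omega) a c ha hcC hac rfl m ham hmc
        have hxab : xCoord d a ≤ xCoord d b := xCoord_mono d (le_of_lt hab)
        have hxam : xCoord d a ≤ xCoord d m := xCoord_mono d (le_of_lt ham)
        have hxac : xCoord d a < xCoord d c :=
          xCoord_strict d hd hac (le_trans (le_of_lt hcb) hbs)
        have h1 : (yCoord Θ d b - yCoord Θ d a) * (xCoord d c - xCoord d a) ≤
            (yCoord Θ d c - yCoord Θ d a) * (xCoord d b - xCoord d a) := by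
          simp only [D] at hA; linarith
        have h2 : (yCoord Θ d c - yCoord Θ d a) * (xCoord d m - xCoord d a) ≤
            (yCoord Θ d m - yCoord Θ d a) * (xCoord d c - xCoord d a) := by
          simp only [D] at hIH; linarith
        have h3 := slope_trans (by linarith) (by linarith) (by linarith) h1 h2
        simp only [D]; linarith
      · exact hA
      · have hIH : 0 ≤ D Θ d c m b :=
          ih (b - c) (by omega) c b hcC hb hcb rfl m hcm hmb
        have hxmb : xCoord d m ≤ xCoord d b := xCoord_mono d (le_of_lt hmb)
        have hxab : xCoord d a ≤ xCoord d b := xCoord_mono d (le_of_lt hab)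
        have hxcb : xCoord d c < xCoord d b := xCoord_strict d hd hcb hbs
        have h1 : (yCoord Θ d b - yCoord Θ d m) * (xCoord d b - xCoord d c) ≤
            (yCoord Θ d b - yCoord Θ d c) * (xCoord d b - xCoord d m) := by
          rw [D_form3] at hIH; linarith
        have h2 : (yCoord Θ d b - yCoord Θ d c) * (xCoord d b - xCoord d a) ≤
            (yCoord Θ d b - yCoord Θ d a) * (xCoord d b - xCoord d c) := by
          rw [D_form3] at hA; linarith
        have h3 := slope_trans (by linarith) (by linarith) (by linarith) h1 h2
        rw [D_form3]; linarith
    · have hgap : ∀ x ∈ C, ¬(a < x ∧ x < b) := by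
        intro x hx hcon
        exact hS ⟨x, Finset.mem_filter.2 ⟨hx, hcon⟩⟩
      exact hchord a ha b hb hab hgap m ham hmb

end Chain
end Stmt7Aux

/-- The collection `A(d*)` of admissible subsets is a simplicial complex:
it is closed under taking subsets. -/
theorem stmt7 {ι : Type*} [Fintype ι] (Θ : ι → ℤ) (d : ℕ → ι → ℕ) (s : ℕ)
    (hd : ∀ j, j < s → d j ≠ 0) (F G : Finset ℕ) (hGF : G ⊆ F)
    (hF : AdmissibleSet Θ d s F) : AdmissibleSet Θ d s G := by
  obtain ⟨hF1, hF2, hF3⟩ := hF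
  set C : Finset ℕ := insert 0 (insert s F) with hCdef
  have hCs : ∀ c ∈ C, c ≤ s := by
    intro c hc
    simp only [hCdef, Finset.mem_insert] at hc
    rcases hc with rfl | rfl | hc
    · exact Nat.zero_le _
    · exact le_refl _
    · exact le_of_lt (Finset.mem_Ioo.1 (hF1 hc)).2
  have hconv : ∀ a ∈ C, ∀ b ∈ C, ∀ c ∈ C, a < b → b < c →
      (∀ m ∈ C, ¬(a < m ∧ m < b)) → (∀ m ∈ C, ¬(b < m ∧ m < c)) →
      0 ≤ Stmt7Aux.D Θ d a b c := by
    intro a ha b hb c hc hab hbc g1 g2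
    have := hF2 a ha b hb c hc hab hbc g1 g2
    rw [Stmt7Aux.D_form2]
    linarith
  have hchord : ∀ a ∈ C, ∀ b ∈ C, a < b → (∀ m ∈ C, ¬(a < m ∧ m < b)) →
      ∀ m, a < m → m < b → 0 ≤ Stmt7Aux.D Θ d a m b := by
    intro a ha b hb hab g m ham hmb
    have := hF3 a ha b hb hab g m ham hmb
    simp only [Stmt7Aux.D]
    linarith
  have hP1 : ∀ a ∈ C, ∀ b ∈ C, a < b → ∀ m, a < m → m < b →
      0 ≤ Stmt7Aux.D Θ d a m b := by
    intro a ha b hb hab m ham hmb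
    exact Stmt7Aux.lemP1 Θ d s hd C hCs hconv hchord (b - a) a b ha hb hab rfl m ham hmb
  have hsub : insert 0 (insert s G) ⊆ C := by
    rw [hCdef]
    exact Finset.insert_subset_insert _ (Finset.insert_subset_insert _ hGF)
  refine ⟨fun x hx => hF1 (hGF hx), ?_, ?_⟩
  · intro a ha b hb c hc hab hbc _ _
    have h := hP1 a (hsub ha) c (hsub hc) (lt_trans hab hbc) b hab hbc
    rw [Stmt7Aux.D_form2] at h
    linarith
  · intro a ha b hb hab _ m ham hmb
    have h := hP1 a (hsub ha) b (hsub hb) hab m ham hmb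
    simp only [Stmt7Aux.D] at h
    linarith
end

section
/- Let d* = (d^1, …, d^s) be a tuple of nonzero elements of N^I of weight d = Σ_k d^k such that either d* = (d) or P(d*) lies strictly above P((d)) (i.e., μ(d^1+…+d^k) > μ(d) for all k = 1,…,s−1). Then Σ_{I ∈ A(d*)} (−1)^{#I} equals 1 if d* = (d) and 0 otherwise. -/
open scoped Classical

namespace OssaAux

variable {ι : Type*} [Fintype ι]

/-- slope of the chord between vertices `a` and `b`, as a rational number. -/
noncomputable def sl (Θ : ι → ℤ) (d : ℕ → ι → ℕ) (a b : ℕ) : ℚ :=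
  (((yCoord Θ d b : ℤ) : ℚ) - ((yCoord Θ d a : ℤ) : ℚ)) /
    (((xCoord d b : ℤ) : ℚ) - ((xCoord d a : ℤ) : ℚ))

lemma xCoord_zero (d : ℕ → ι → ℕ) : xCoord d 0 = 0 := by simp [xCoord]

lemma yCoord_zero (Θ : ι → ℤ) (d : ℕ → ι → ℕ) : yCoord Θ d 0 = 0 := by simp [yCoord]

section XY

variable {Θ : ι → ℤ} {d : ℕ → ι → ℕ} {s : ℕ}

lemma X_lt (hd : ∀ j, j < s → d j ≠ 0) {a b : ℕ} (hab : a < b) (hbs : b ≤ s) :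
    xCoord d a < xCoord d b := by
  have key : ∀ m, m < s → xCoord d m < xCoord d (m + 1) := by
    intro m hm
    have hdm : d m ≠ 0 := hd m hm
    obtain ⟨i, hi⟩ : ∃ i, d m i ≠ 0 := by
      by_contra h
      push_neg at h
      exact hdm (funext fun i => h i)
    have hpos : 0 < ∑ i, (d m i : ℤ) := by
      have : (0 : ℤ) < (d m i : ℤ) := by exact_mod_cast Nat.pos_of_ne_zero hi
      refine Finset.sum_pos' (fun j _ => by positivity) ⟨i, Finset.mem_univ i, this⟩
    have : xCoord d (m + 1) = xCoord d m + ∑ i, (d m i : ℤ) := by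
      simp [xCoord, Finset.sum_range_succ]
    omega
  clear hd
  induction b with
  | zero => omega
  | succ n ih =>
    rcases Nat.lt_or_ge a n with h | h
    · exact lt_trans (ih h (by omega)) (key n (by omega))
    · have : a = n := by omega
      subst this
      exact key a (by omega)

lemma Xq_pos (hd : ∀ j, j < s → d j ≠ 0) {a b : ℕ} (hab : a < b) (hbs : b ≤ s) :
    (0 : ℚ) < ((xCoord d b : ℤ) : ℚ) - ((xCoord d a : ℤ) : ℚ) := by
  have := X_lt (d := d) hd hab hbs
  have : ((xCoord d a : ℤ) : ℚ) < ((xCoord d b : ℤ) : ℚ) := by exact_mod_cast this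
  linarith

/-- generic sign-transfer helper -/
lemma signs_helper {x y z p q r : ℚ} (hp : 0 < p) (hq : 0 < q) (hr : 0 < r)
    (e1 : y * r = x * p) (e2 : z * r = x * q) :
    ((0 ≤ x ↔ 0 ≤ y) ∧ (0 ≤ x ↔ 0 ≤ z)) ∧ ((x ≤ 0 ↔ y ≤ 0) ∧ (x ≤ 0 ↔ z ≤ 0)) := by
  refine ⟨⟨⟨?_, ?_⟩, ⟨?_, ?_⟩⟩, ⟨⟨?_, ?_⟩, ⟨?_, ?_⟩⟩⟩ <;> intro hh
  · nlinarith [mul_nonneg hh hp.le]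
  · nlinarith [mul_nonneg hh hr.le]
  · nlinarith [mul_nonneg hh hq.le]
  · nlinarith [mul_nonneg hh hr.le]
  · nlinarith [mul_nonneg (neg_nonneg.mpr hh) hp.le]
  · nlinarith [mul_nonneg (neg_nonneg.mpr hh) hr.le]
  · nlinarith [mul_nonneg (neg_nonneg.mpr hh) hq.le]
  · nlinarith [mul_nonneg (neg_nonneg.mpr hh) hr.le]

/-- The three slope differences of a triple all have the same sign. -/
lemma sl_signs (hd : ∀ j, j < s → d j ≠ 0) {a b c : ℕ} (hab : a < b) (hbc : b < c)
    (hcs : c ≤ s) :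
    ((0 ≤ sl Θ d a b - sl Θ d b c ↔ 0 ≤ sl Θ d a c - sl Θ d b c) ∧
     (0 ≤ sl Θ d a b - sl Θ d b c ↔ 0 ≤ sl Θ d a b - sl Θ d a c)) ∧
    ((sl Θ d a b - sl Θ d b c ≤ 0 ↔ sl Θ d a c - sl Θ d b c ≤ 0) ∧
     (sl Θ d a b - sl Θ d b c ≤ 0 ↔ sl Θ d a b - sl Θ d a c ≤ 0)) := by
  have p1 := Xq_pos (d := d) hd hab (le_trans (le_of_lt hbc) hcs)
  have p2 := Xq_pos (d := d) hd hbc hcs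
  have p3 := Xq_pos (d := d) hd (lt_trans hab hbc) hcs
  have e1 : (sl Θ d a c - sl Θ d b c) * (((xCoord d c : ℤ) : ℚ) - ((xCoord d a : ℤ) : ℚ)) =
      (sl Θ d a b - sl Θ d b c) * (((xCoord d b : ℤ) : ℚ) - ((xCoord d a : ℤ) : ℚ)) := by
    unfold sl
    field_simp
    ring
  have e2 : (sl Θ d a b - sl Θ d a c) * (((xCoord d c : ℤ) : ℚ) - ((xCoord d a : ℤ) : ℚ)) =
      (sl Θ d a b - sl Θ d b c) * (((xCoord d c : ℤ) : ℚ) - ((xCoord d b : ℤ) : ℚ)) := by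
    unfold sl
    field_simp
    ring
  exact signs_helper p1 p2 p3 e1 e2

lemma sl_T1 (hd : ∀ j, j < s → d j ≠ 0) {a b c : ℕ} (hab : a < b) (hbc : b < c) (hcs : c ≤ s)
    (h : sl Θ d b c ≤ sl Θ d a b) :
    sl Θ d b c ≤ sl Θ d a c ∧ sl Θ d a c ≤ sl Θ d a b := by
  obtain ⟨⟨i1, i2⟩, _, _⟩ := sl_signs (Θ := Θ) hd hab hbc hcs
  have hy := i1.mp (by linarith)
  have hz := i2.mp (by linarith)
  constructor <;> linarith

lemma sl_T2 (hd : ∀ j, j < s → d j ≠ 0) {a b c : ℕ} (hab : a < b) (hbc : b < c) (hcs : c ≤ s)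
    (h : sl Θ d a b ≤ sl Θ d b c) :
    sl Θ d a b ≤ sl Θ d a c ∧ sl Θ d a c ≤ sl Θ d b c := by
  obtain ⟨_, j1, j2⟩ := sl_signs (Θ := Θ) hd hab hbc hcs
  have hy := j1.mp (by linarith)
  have hz := j2.mp (by linarith)
  constructor <;> linarith

lemma sl_T3 (hd : ∀ j, j < s → d j ≠ 0) {a b c : ℕ} (hab : a < b) (hbc : b < c) (hcs : c ≤ s)
    (h : sl Θ d a c ≤ sl Θ d a b) :
    sl Θ d b c ≤ sl Θ d a c ∧ sl Θ d b c ≤ sl Θ d a b := by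
  obtain ⟨⟨i1, i2⟩, _, _⟩ := sl_signs (Θ := Θ) hd hab hbc hcs
  have hx := i2.mpr (by linarith)
  have hy := i1.mp hx
  constructor <;> linarith

lemma sl_T4 (hd : ∀ j, j < s → d j ≠ 0) {a b c : ℕ} (hab : a < b) (hbc : b < c) (hcs : c ≤ s)
    (h : sl Θ d a b ≤ sl Θ d a c) :
    sl Θ d a b ≤ sl Θ d b c ∧ sl Θ d a c ≤ sl Θ d b c := by
  obtain ⟨_, j1, j2⟩ := sl_signs (Θ := Θ) hd hab hbc hcs
  have hx := j2.mpr (by linarith)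
  have hy := j1.mp hx
  constructor <;> linarith

lemma sl_T5 (hd : ∀ j, j < s → d j ≠ 0) {a b c : ℕ} (hab : a < b) (hbc : b < c) (hcs : c ≤ s)
    (h : sl Θ d a c ≤ sl Θ d b c) :
    sl Θ d a b ≤ sl Θ d a c ∧ sl Θ d a b ≤ sl Θ d b c := by
  obtain ⟨_, j1, j2⟩ := sl_signs (Θ := Θ) hd hab hbc hcs
  have hx := j1.mpr (by linarith)
  have hz := j2.mp hx
  constructor <;> linarith

lemma sl_T6 (hd : ∀ j, j < s → d j ≠ 0) {a b c : ℕ} (hab : a < b) (hbc : b < c) (hcs : c ≤ s)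
    (h : sl Θ d b c ≤ sl Θ d a c) :
    sl Θ d a c ≤ sl Θ d a b ∧ sl Θ d b c ≤ sl Θ d a b := by
  obtain ⟨⟨i1, i2⟩, _, _⟩ := sl_signs (Θ := Θ) hd hab hbc hcs
  have hx := i1.mpr (by linarith)
  have hz := i2.mp hx
  constructor <;> linarith

end XY

end OssaAux
namespace OssaAux

variable {ι : Type*} [Fintype ι]

/-- `b` is the immediate successor of `a` in `{0, s} ∪ F`. -/
def adjC (s : ℕ) (F : Finset ℕ) (a b : ℕ) : Prop :=
  a ∈ insert 0 (insert s F) ∧ b ∈ insert 0 (insert s F) ∧ a < b ∧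
    ∀ m ∈ insert 0 (insert s F), ¬(a < m ∧ m < b)

section Conv

variable (Θ : ι → ℤ) (d : ℕ → ι → ℕ) (s : ℕ)

lemma condA_iff (hd : ∀ j, j < s → d j ≠ 0) {a b c : ℕ} (hab : a < b) (hbc : b < c)
    (hcs : c ≤ s) :
    ((yCoord Θ d b - yCoord Θ d a) * (xCoord d c - xCoord d b) ≥
      (yCoord Θ d c - yCoord Θ d b) * (xCoord d b - xCoord d a)) ↔
    sl Θ d b c ≤ sl Θ d a b := by
  have p1 := Xq_pos (d := d) hd hab (le_trans (le_of_lt hbc) hcs)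
  have p2 := Xq_pos (d := d) hd hbc hcs
  unfold sl
  rw [div_le_div_iff₀ p2 p1, ge_iff_le]
  constructor
  · intro h
    have h' : ((yCoord Θ d c - yCoord Θ d b) * (xCoord d b - xCoord d a) : ℤ) ≤
        ((yCoord Θ d b - yCoord Θ d a) * (xCoord d c - xCoord d b) : ℤ) := h
    have := (Int.cast_le (R := ℚ)).mpr h'
    push_cast at this
    nlinarith [this]
  · intro h
    have h' : (((yCoord Θ d c - yCoord Θ d b) * (xCoord d b - xCoord d a) : ℤ) : ℚ) ≤
        (((yCoord Θ d b - yCoord Θ d a) * (xCoord d c - xCoord d b) : ℤ) : ℚ) := by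
      push_cast
      nlinarith [h]
    exact_mod_cast h'

lemma condB_iff (hd : ∀ j, j < s → d j ≠ 0) {a m b : ℕ} (ham : a < m) (hmb : m < b)
    (hbs : b ≤ s) :
    ((yCoord Θ d m - yCoord Θ d a) * (xCoord d b - xCoord d a) ≥
      (yCoord Θ d b - yCoord Θ d a) * (xCoord d m - xCoord d a)) ↔
    sl Θ d a b ≤ sl Θ d a m := by
  have p1 := Xq_pos (d := d) hd ham (le_trans (le_of_lt hmb) hbs)
  have p2 := Xq_pos (d := d) hd (lt_trans ham hmb) hbs
  unfold sl
  rw [div_le_div_iff₀ p2 p1, ge_iff_le]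
  constructor
  · intro h
    have h' : ((yCoord Θ d b - yCoord Θ d a) * (xCoord d m - xCoord d a) : ℤ) ≤
        ((yCoord Θ d m - yCoord Θ d a) * (xCoord d b - xCoord d a) : ℤ) := h
    have := (Int.cast_le (R := ℚ)).mpr h'
    push_cast at this
    nlinarith [this]
  · intro h
    have h' : (((yCoord Θ d b - yCoord Θ d a) * (xCoord d m - xCoord d a) : ℤ) : ℚ) ≤
        (((yCoord Θ d m - yCoord Θ d a) * (xCoord d b - xCoord d a) : ℤ) : ℚ) := by
      push_cast
      nlinarith [h]
    exact_mod_cast h'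

end Conv

section Struct

variable {Θ : ι → ℤ} {d : ℕ → ι → ℕ} {s : ℕ} {F : Finset ℕ}

lemma mem_C_le (hF : F ⊆ Finset.Ioo 0 s) {a : ℕ} (ha : a ∈ insert 0 (insert s F)) : a ≤ s := by
  rcases Finset.mem_insert.mp ha with h | h
  · omega
  rcases Finset.mem_insert.mp h with h | h
  · omega
  · exact (Finset.mem_Ioo.mp (hF h)).2.le

/-- restatement of admissibility in terms of slopes -/
lemma adm_iff (hd : ∀ j, j < s → d j ≠ 0) (F : Finset ℕ) :
    AdmissibleSet Θ d s F ↔ (F ⊆ Finset.Ioo 0 s) ∧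
      (∀ a b c : ℕ, adjC s F a b → adjC s F b c → sl Θ d b c ≤ sl Θ d a b) ∧
      (∀ a b : ℕ, adjC s F a b → ∀ m, a < m → m < b → sl Θ d a b ≤ sl Θ d a m) := by
  constructor
  · rintro ⟨hsub, hA, hB⟩
    refine ⟨hsub, ?_, ?_⟩
    · rintro a b c ⟨ha, hb, hab, hgab⟩ ⟨_, hc, hbc, hgbc⟩
      have hcs := mem_C_le hsub hc
      exact (condA_iff Θ d s hd hab hbc hcs).mp (hA a ha b hb c hc hab hbc hgab hgbc)
    · rintro a b ⟨ha, hb, hab, hgab⟩ m ham hmb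
      have hbs := mem_C_le hsub hb
      exact (condB_iff Θ d s hd ham hmb hbs).mp (hB a ha b hb hab hgab m ham hmb)
  · rintro ⟨hsub, hA, hB⟩
    refine ⟨hsub, ?_, ?_⟩
    · intro a ha b hb c hc hab hbc hgab hgbc
      have hcs := mem_C_le hsub hc
      exact (condA_iff Θ d s hd hab hbc hcs).mpr (hA a b c ⟨ha, hb, hab, hgab⟩ ⟨hb, hc, hbc, hgbc⟩)
    · intro a ha b hb hab hgab m ham hmb
      have hbs := mem_C_le hsub hb
      exact (condB_iff Θ d s hd ham hmb hbs).mpr (hB a b ⟨ha, hb, hab, hgab⟩ m ham hmb)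

/-- classification of adjacency in `F.erase u` -/
lemma adjC_erase {u a b : ℕ} (hu : u ∈ F) (h : adjC s (F.erase u) a b) :
    adjC s F a b ∨ (a < u ∧ u < b ∧ adjC s F a u ∧ adjC s F u b) := by
  obtain ⟨ha, hb, hab, hgap⟩ := h
  have hsub : ∀ {x : ℕ}, x ∈ insert 0 (insert s (F.erase u)) → x ∈ insert 0 (insert s F) := by
    intro x hx
    rcases Finset.mem_insert.mp hx with h | h
    · exact Finset.mem_insert.mpr (Or.inl h)
    rcases Finset.mem_insert.mp h with h | h
    · exact Finset.mem_insert.mpr (Or.inr (Finset.mem_insert.mpr (Or.inl h)))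
    · exact Finset.mem_insert.mpr (Or.inr (Finset.mem_insert.mpr (Or.inr (Finset.mem_of_mem_erase h))))
  have hmem : ∀ {x : ℕ}, x ∈ insert 0 (insert s F) → x ≠ u → x ∈ insert 0 (insert s (F.erase u)) := by
    intro x hx hxu
    rcases Finset.mem_insert.mp hx with h | h
    · exact Finset.mem_insert.mpr (Or.inl h)
    rcases Finset.mem_insert.mp h with h | h
    · exact Finset.mem_insert.mpr (Or.inr (Finset.mem_insert.mpr (Or.inl h)))
    · exact Finset.mem_insert.mpr (Or.inr (Finset.mem_insert.mpr
        (Or.inr (Finset.mem_erase.mpr ⟨hxu, h⟩))))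
  by_cases hg : ∀ m ∈ insert 0 (insert s F), ¬(a < m ∧ m < b)
  · exact Or.inl ⟨hsub ha, hsub hb, hab, hg⟩
  · push_neg at hg
    obtain ⟨m, hm, ham, hmb⟩ := hg
    have hmu : m = u := by
      by_contra hne
      exact hgap m (hmem hm hne) ⟨ham, hmb⟩
    subst hmu
    have huC : m ∈ insert 0 (insert s F) :=
      Finset.mem_insert.mpr (Or.inr (Finset.mem_insert.mpr (Or.inr hu)))
    refine Or.inr ⟨ham, hmb, ⟨hsub ha, huC, ham, ?_⟩, ⟨huC, hsub hb, hmb, ?_⟩⟩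
    · intro k hk ⟨hak, hkm⟩
      have hku : k ≠ m := by omega
      exact hgap k (hmem hk hku) ⟨hak, by omega⟩
    · intro k hk ⟨hmk, hkb⟩
      have hku : k ≠ m := by omega
      exact hgap k (hmem hk hku) ⟨by omega, hkb⟩

/-- classification of adjacency in `insert t F`, when `t` lies in the first gap `(0, b₀)`. -/
lemma adjC_insert {t b₀ x y : ℕ} (hF : F ⊆ Finset.Ioo 0 s) (hb : adjC s F 0 b₀)
    (h0t : 0 < t) (htb : t < b₀) (h : adjC s (insert t F) x y) :
    (x = 0 ∧ y = t) ∨ (x = t ∧ y = b₀) ∨ (x ≠ t ∧ y ≠ t ∧ adjC s F x y) := by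
  obtain ⟨hx, hy, hxy, hgap⟩ := h
  obtain ⟨h0C, hb0C, h0b0, hgap0⟩ := hb
  have hC'sub : ∀ {z : ℕ}, z ∈ insert 0 (insert s F) → z ∈ insert 0 (insert s (insert t F)) := by
    intro z hz
    rcases Finset.mem_insert.mp hz with h | h
    · exact Finset.mem_insert.mpr (Or.inl h)
    rcases Finset.mem_insert.mp h with h | h
    · exact Finset.mem_insert.mpr (Or.inr (Finset.mem_insert.mpr (Or.inl h)))
    · exact Finset.mem_insert.mpr (Or.inr (Finset.mem_insert.mpr (Or.inr
        (Finset.mem_insert.mpr (Or.inr h)))))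
  have hC'mem : ∀ {z : ℕ}, z ∈ insert 0 (insert s (insert t F)) → z ≠ t →
      z ∈ insert 0 (insert s F) := by
    intro z hz hzt
    rcases Finset.mem_insert.mp hz with h | h
    · exact Finset.mem_insert.mpr (Or.inl h)
    rcases Finset.mem_insert.mp h with h | h
    · exact Finset.mem_insert.mpr (Or.inr (Finset.mem_insert.mpr (Or.inl h)))
    · rcases Finset.mem_insert.mp h with h | h
      · exact absurd h hzt
      · exact Finset.mem_insert.mpr (Or.inr (Finset.mem_insert.mpr (Or.inr h)))
  have hb0s : b₀ ≤ s := mem_C_le hF hb0C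
  -- elements of `{0,s} ∪ F` that are positive are ≥ b₀
  have hge : ∀ {z : ℕ}, z ∈ insert 0 (insert s F) → 0 < z → b₀ ≤ z := by
    intro z hz h0z
    by_contra hlt
    push_neg at hlt
    exact hgap0 z hz ⟨h0z, hlt⟩
  by_cases hxt : x = t
  · subst hxt
    right; left
    refine ⟨rfl, ?_⟩
    have hyF : y ∈ insert 0 (insert s F) := hC'mem hy (by omega)
    have hyb : b₀ ≤ y := hge hyF (by omega)
    have : ¬(x < b₀ ∧ b₀ < y) := hgap b₀ (hC'sub hb0C)
    omega
  · by_cases hyt : y = t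
    · subst hyt
      left
      refine ⟨?_, rfl⟩
      have hxF : x ∈ insert 0 (insert s F) := hC'mem hx hxt
      by_contra hx0
      have : b₀ ≤ x := hge hxF (by omega)
      omega
    · right; right
      refine ⟨hxt, hyt, hC'mem hx hxt, hC'mem hy hyt, hxy, ?_⟩
      intro m hm
      exact hgap m (hC'sub hm)

end Struct

end OssaAux
namespace OssaAux

variable {ι : Type*} [Fintype ι]

section Main

variable {Θ : ι → ℤ} {d : ℕ → ι → ℕ} {s : ℕ} {F : Finset ℕ}

lemma adm_empty (hd : ∀ j, j < s → d j ≠ 0) (hs : 1 ≤ s)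
    (hab : ∀ m, 0 < m → m < s → sl Θ d 0 s ≤ sl Θ d 0 m) :
    AdmissibleSet Θ d s (∅ : Finset ℕ) := by
  rw [adm_iff hd]
  have hmem : ∀ {x : ℕ}, x ∈ insert 0 (insert s (∅ : Finset ℕ)) → x = 0 ∨ x = s := by
    intro x hx
    rcases Finset.mem_insert.mp hx with h | h
    · exact Or.inl h
    rcases Finset.mem_insert.mp h with h | h
    · exact Or.inr h
    · exact absurd h (Finset.notMem_empty x)
  refine ⟨by simp, ?_, ?_⟩
  · rintro a b c ⟨ha, hb, hab', _⟩ ⟨_, hc, hbc, _⟩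
    rcases hmem ha with rfl | rfl <;> rcases hmem hb with rfl | rfl <;>
      rcases hmem hc with rfl | rfl <;> omega
  · rintro a b ⟨ha, hb, hab', _⟩ m ham hmb
    rcases hmem ha with rfl | rfl <;> rcases hmem hb with rfl | rfl
    · omega
    · exact hab m ham hmb
    · omega
    · omega

lemma adm_erase (hd : ∀ j, j < s → d j ≠ 0) (hF : AdmissibleSet Θ d s F) {u : ℕ}
    (hu : u ∈ F) : AdmissibleSet Θ d s (F.erase u) := by
  rw [adm_iff hd] at hF ⊢
  obtain ⟨hsub, hA, hB⟩ := hF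
  refine ⟨Finset.Subset.trans (Finset.erase_subset u F) hsub, ?_, ?_⟩
  · rintro x y z hxy hyz
    rcases adjC_erase hu hxy with hxy' | ⟨hxu, huy, hxu_adj, huy_adj⟩
    · rcases adjC_erase hu hyz with hyz' | ⟨hyu, huz, hyu_adj, huz_adj⟩
      · exact hA x y z hxy' hyz'
      · -- (y,z) spans u
        have hyu_le : sl Θ d y u ≤ sl Θ d x y := hA x y u hxy' hyu_adj
        have huz_le : sl Θ d u z ≤ sl Θ d y u := hA y u z hyu_adj huz_adj
        have hzs : z ≤ s := mem_C_le hsub huz_adj.2.1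
        have := sl_T1 (Θ := Θ) hd hyu huz hzs huz_le
        linarith [this.2]
    · -- (x,y) spans u
      rcases adjC_erase hu hyz with hyz' | ⟨hyu, huz, _, _⟩
      · have hconc : sl Θ d u y ≤ sl Θ d x u := hA x u y hxu_adj huy_adj
        have hys : y ≤ s := mem_C_le hsub huy_adj.2.1
        have h1 := sl_T1 (Θ := Θ) hd hxu huy hys hconc
        have h2 : sl Θ d y z ≤ sl Θ d u y := hA u y z huy_adj hyz'
        linarith [h1.2, h1.1]
      · omega
  · rintro x y hxy m hxm hmy
    rcases adjC_erase hu hxy with hxy' | ⟨hxu, huy, hxu_adj, huy_adj⟩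
    · exact hB x y hxy' m hxm hmy
    · have hconc : sl Θ d u y ≤ sl Θ d x u := hA x u y hxu_adj huy_adj
      have hys : y ≤ s := mem_C_le hsub huy_adj.2.1
      have hT1 := sl_T1 (Θ := Θ) hd hxu huy hys hconc
      -- hT1 : sl u y ≤ sl x y ∧ sl x y ≤ sl x u
      rcases lt_trichotomy m u with hmu | rfl | hum
      · have := hB x u hxu_adj m hxm hmu
        linarith [hT1.2]
      · exact hT1.2
      · have hgm : sl Θ d u y ≤ sl Θ d u m := hB u y huy_adj m hum hmy
        have hT3 := sl_T3 (Θ := Θ) hd hum hmy hys hgm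
        -- sl m y ≤ sl u y ∧ sl m y ≤ sl u m
        have hmy_xy : sl Θ d m y ≤ sl Θ d x y := by linarith [hT3.1, hT1.1]
        have hT6 := sl_T6 (Θ := Θ) hd hxm hmy hys hmy_xy
        exact hT6.1

lemma adm_insert_first (hd : ∀ j, j < s → d j ≠ 0) (hF : AdmissibleSet Θ d s F) {b : ℕ}
    (hb : adjC s F 0 b) {t : ℕ} (h0t : 0 < t) (htb : t < b)
    (h1 : ∀ k, 0 < k → k < b → sl Θ d k b ≤ sl Θ d t b)
    (h2 : ∀ c, adjC s F b c → sl Θ d b c ≤ sl Θ d t b) :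
    AdmissibleSet Θ d s (insert t F) := by
  rw [adm_iff hd] at hF ⊢
  obtain ⟨hsub, hA, hB⟩ := hF
  have hbs : b ≤ s := mem_C_le hsub hb.2.1
  have hts : t < s := by omega
  have htIoo : t ∈ Finset.Ioo 0 s := Finset.mem_Ioo.mpr ⟨h0t, hts⟩
  have hGood0b : ∀ m, 0 < m → m < b → sl Θ d 0 b ≤ sl Θ d 0 m := fun m h h' =>
    hB 0 b hb m h h'
  have hconc_t : sl Θ d t b ≤ sl Θ d 0 t :=
    (sl_T3 (Θ := Θ) hd h0t htb hbs (hGood0b t h0t htb)).2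
  refine ⟨Finset.insert_subset htIoo hsub, ?_, ?_⟩
  · rintro x y z hxy hyz
    have hxltz : y < z := hyz.2.2.1
    have hxlty : x < y := hxy.2.2.1
    rcases adjC_insert hsub hb h0t htb hxy with ⟨hx0, hyt⟩ | ⟨hxt, hyb⟩ | ⟨hxnt, hynt, hxy'⟩
    · -- (x,y) = (0,t)
      rcases adjC_insert hsub hb h0t htb hyz with ⟨h0, _⟩ | ⟨_, hzb⟩ | ⟨hyt', _, _⟩
      · omega
      · rw [hx0, hyt, hzb]; exact hconc_t
      · exact absurd hyt hyt'
    · -- (x,y) = (t,b)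
      rcases adjC_insert hsub hb h0t htb hyz with ⟨h0, _⟩ | ⟨hbt, _⟩ | ⟨_, _, hyz'⟩
      · omega
      · omega
      · rw [hxt, hyb]; rw [hyb] at hyz'; exact h2 z hyz'
    · -- (x,y) plain
      rcases adjC_insert hsub hb h0t htb hyz with ⟨hy0, _⟩ | ⟨hyt', _⟩ | ⟨_, _, hyz'⟩
      · omega
      · exact absurd hyt' hynt
      · exact hA x y z hxy' hyz'
  · rintro x y hxy m hxm hmy
    rcases adjC_insert hsub hb h0t htb hxy with ⟨hx0, hyt⟩ | ⟨hxt, hyb⟩ | ⟨hxnt, hynt, hxy'⟩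
    · -- pair (0,t), show sl 0 t ≤ sl 0 m
      rw [hx0, hyt]
      rw [hx0] at hxm
      rw [hyt] at hmy
      have hmb : m < b := by omega
      have hmt : m < t := hmy
      have h1m := h1 m hxm hmb
      have hT5 := sl_T5 (Θ := Θ) hd hmt htb hbs h1m
      -- sl m t ≤ sl m b ∧ sl m t ≤ sl t b
      have : sl Θ d m t ≤ sl Θ d 0 t := by linarith [hT5.2]
      exact (sl_T6 (Θ := Θ) hd hxm hmt (le_of_lt hts) this).1
    · -- pair (t,b), show sl t b ≤ sl t m
      rw [hxt, hyb]
      rw [hxt] at hxm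
      rw [hyb] at hmy
      have h1m := h1 m (by omega) hmy
      exact (sl_T6 (Θ := Θ) hd (by omega : t < m) hmy hbs h1m).1
    · exact hB x y hxy' m hxm hmy

lemma adm_singleton (hd : ∀ j, j < s → d j ≠ 0) (hs2 : 2 ≤ s)
    (hab : ∀ m, 0 < m → m < s → sl Θ d 0 s ≤ sl Θ d 0 m) :
    ∃ t, 0 < t ∧ t < s ∧ AdmissibleSet Θ d s ({t} : Finset ℕ) := by
  have hempty := adm_empty (Θ := Θ) hd (by omega) hab
  have hadj : adjC s (∅ : Finset ℕ) 0 s := by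
    refine ⟨Finset.mem_insert_self 0 _,
      Finset.mem_insert.mpr (Or.inr (Finset.mem_insert_self s _)), by omega, ?_⟩
    intro m hm
    rcases Finset.mem_insert.mp hm with rfl | hm
    · omega
    rcases Finset.mem_insert.mp hm with rfl | hm
    · omega
    · exact absurd hm (Finset.notMem_empty m)
  obtain ⟨t, htmem, hmax⟩ := Finset.exists_max_image (Finset.Ioo 0 s)
    (fun k => sl Θ d k s) ⟨1, Finset.mem_Ioo.mpr ⟨by omega, by omega⟩⟩
  obtain ⟨h0t, hts⟩ := Finset.mem_Ioo.mp htmem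
  have h1 : ∀ k, 0 < k → k < s → sl Θ d k s ≤ sl Θ d t s := fun k h h' =>
    hmax k (Finset.mem_Ioo.mpr ⟨h, h'⟩)
  have h2 : ∀ c, adjC s (∅ : Finset ℕ) s c → sl Θ d s c ≤ sl Θ d t s := by
    rintro c ⟨_, hc, hsc, _⟩
    rcases Finset.mem_insert.mp hc with rfl | hc
    · omega
    rcases Finset.mem_insert.mp hc with rfl | hc
    · omega
    · exact absurd hc (Finset.notMem_empty c)
  have := adm_insert_first hd hempty hadj h0t hts h1 h2
  exact ⟨t, h0t, hts, this⟩

lemma adm_swap (hd : ∀ j, j < s → d j ≠ 0) (hF : AdmissibleSet Θ d s F) {t : ℕ}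
    (ht : t ∈ F) (hmin : ∀ u ∈ F, t ≤ u) {m : ℕ} (h0m : 0 < m) (hmt : m < t)
    (hAm : AdmissibleSet Θ d s (insert m (F.erase t))) :
    ∃ t', 0 < t' ∧ t' < t ∧ AdmissibleSet Θ d s (insert t' F) := by
  have hsub : F ⊆ Finset.Ioo 0 s := hF.1
  have htIoo := Finset.mem_Ioo.mp (hsub ht)
  have htC : t ∈ insert 0 (insert s F) :=
    Finset.mem_insert.mpr (Or.inr (Finset.mem_insert.mpr (Or.inr ht)))
  have hb : adjC s F 0 t := by
    refine ⟨Finset.mem_insert_self 0 _, htC, htIoo.1, ?_⟩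
    intro k hk
    rcases Finset.mem_insert.mp hk with rfl | hk
    · omega
    rcases Finset.mem_insert.mp hk with rfl | hk
    · omega
    · have := hmin k hk; omega
  obtain ⟨t', ht'mem, hmax⟩ := Finset.exists_max_image (Finset.Ioo 0 t)
    (fun k => sl Θ d k t) ⟨m, Finset.mem_Ioo.mpr ⟨h0m, hmt⟩⟩
  obtain ⟨h0t', ht't⟩ := Finset.mem_Ioo.mp ht'mem
  have h1 : ∀ k, 0 < k → k < t → sl Θ d k t ≤ sl Θ d t' t := fun k h h' =>
    hmax k (Finset.mem_Ioo.mpr ⟨h, h'⟩)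
  have h2 : ∀ c, adjC s F t c → sl Θ d t c ≤ sl Θ d t' t := by
    rintro c hc
    obtain ⟨_, hcC, htc, hgaptc⟩ := hc
    have hcs : c ≤ s := mem_C_le hsub hcC
    -- (m, c) is an adjacent pair in insert m (F.erase t)
    have hadj_m : adjC s (insert m (F.erase t)) m c := by
      refine ⟨?_, ?_, by omega, ?_⟩
      · exact Finset.mem_insert.mpr (Or.inr (Finset.mem_insert.mpr (Or.inr
          (Finset.mem_insert_self m _))))
      · rcases Finset.mem_insert.mp hcC with hc0 | hcC'
        · omega
        rcases Finset.mem_insert.mp hcC' with hcs' | hcC''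
        · rw [hcs']; exact Finset.mem_insert.mpr (Or.inr (Finset.mem_insert_self s _))
        · refine Finset.mem_insert.mpr (Or.inr (Finset.mem_insert.mpr (Or.inr
            (Finset.mem_insert.mpr (Or.inr (Finset.mem_erase.mpr ⟨by omega, hcC''⟩))))))
      · intro k hk hk2
        rcases Finset.mem_insert.mp hk with rfl | hk
        · omega
        rcases Finset.mem_insert.mp hk with rfl | hk
        · omega
        rcases Finset.mem_insert.mp hk with rfl | hk
        · omega
        · have hkF := Finset.mem_of_mem_erase hk
          have hkt : k ≠ t := (Finset.mem_erase.mp hk).1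
          have htk : t < k := lt_of_le_of_ne (hmin k hkF) (Ne.symm hkt)
          have hkC : k ∈ insert 0 (insert s F) :=
            Finset.mem_insert.mpr (Or.inr (Finset.mem_insert.mpr (Or.inr hkF)))
          exact hgaptc k hkC ⟨htk, hk2.2⟩
    have hBm := ((adm_iff hd _).mp hAm).2.2
    have hmc : sl Θ d m c ≤ sl Θ d m t := hBm m c hadj_m t hmt htc
    have hT3 := sl_T3 (Θ := Θ) hd hmt htc hcs hmc
    -- sl t c ≤ sl m c ∧ sl t c ≤ sl m t
    have := h1 m h0m hmt
    linarith [hT3.2]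
  exact ⟨t', h0t', ht't, adm_insert_first hd hF hb h0t' ht't h1 h2⟩

end Main

end OssaAux
namespace OssaAux

variable {ι : Type*} [Fintype ι]

section Invol

variable {Θ : ι → ℤ} {d : ℕ → ι → ℕ} {s : ℕ}

/-- toggle membership of `u` -/
def tog (u : ℕ) (F : Finset ℕ) : Finset ℕ := if u ∈ F then F.erase u else insert u F

lemma tog_eq_of_mem {u : ℕ} {F : Finset ℕ} (h : u ∈ F) : tog u F = F.erase u := by
  rw [tog, if_pos h]

lemma tog_eq_of_not_mem {u : ℕ} {F : Finset ℕ} (h : u ∉ F) : tog u F = insert u F := by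
  rw [tog, if_neg h]

lemma tog_tog (u : ℕ) (F : Finset ℕ) : tog u (tog u F) = F := by
  by_cases h : u ∈ F
  · rw [tog_eq_of_mem h, tog_eq_of_not_mem (Finset.notMem_erase u F), Finset.insert_erase h]
  · rw [tog_eq_of_not_mem h, tog_eq_of_mem (Finset.mem_insert_self u F), Finset.erase_insert h]

lemma tog_ne (u : ℕ) (F : Finset ℕ) : tog u F ≠ F := by
  by_cases h : u ∈ F
  · rw [tog, if_pos h]
    intro heq
    exact (Finset.notMem_erase u F) (heq.symm ▸ h)
  · rw [tog, if_neg h]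
    intro heq
    exact h (heq ▸ Finset.mem_insert_self u F)

lemma tog_subset {u : ℕ} {F : Finset ℕ} (hu : u ∈ Finset.Ioo 0 s)
    (hF : F ⊆ Finset.Ioo 0 s) : tog u F ⊆ Finset.Ioo 0 s := by
  by_cases h : u ∈ F
  · rw [tog, if_pos h]
    exact Finset.Subset.trans (Finset.erase_subset u F) hF
  · rw [tog, if_neg h]
    exact Finset.insert_subset hu hF

lemma tog_sign (u : ℕ) (F : Finset ℕ) :
    ((-1 : ℤ) ^ (tog u F).card) = -((-1 : ℤ) ^ F.card) := by
  by_cases h : u ∈ F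
  · rw [tog_eq_of_mem h, Finset.card_erase_of_mem h]
    have hc : 1 ≤ F.card := Finset.card_pos.mpr ⟨u, h⟩
    have he : ((-1 : ℤ)) ^ F.card = (-1) ^ (F.card - 1) * (-1) := by
      rw [← pow_succ]
      congr 1
      omega
    rw [he]
    ring
  · rw [tog_eq_of_not_mem h, Finset.card_insert_of_notMem h, pow_succ]
    ring

/-- the set of toggleable positions -/
noncomputable def Tset (Θ : ι → ℤ) (d : ℕ → ι → ℕ) (s : ℕ) (F : Finset ℕ) : Finset ℕ :=
  (Finset.Ioo 0 s).filter (fun u => AdmissibleSet Θ d s (tog u F))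

lemma F_subset_Tset (hd : ∀ j, j < s → d j ≠ 0) {F : Finset ℕ}
    (hF : AdmissibleSet Θ d s F) {u : ℕ} (hu : u ∈ F) : u ∈ Tset Θ d s F := by
  refine Finset.mem_filter.mpr ⟨hF.1 hu, ?_⟩
  rw [tog_eq_of_mem hu]
  exact adm_erase hd hF hu

lemma Tset_nonempty (hd : ∀ j, j < s → d j ≠ 0) (hs2 : 2 ≤ s)
    (hab : ∀ m, 0 < m → m < s → sl Θ d 0 s ≤ sl Θ d 0 m) {F : Finset ℕ}
    (hF : AdmissibleSet Θ d s F) : (Tset Θ d s F).Nonempty := by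
  rcases F.eq_empty_or_nonempty with rfl | ⟨u, hu⟩
  · obtain ⟨t, h0t, hts, hAdm⟩ := adm_singleton (Θ := Θ) (d := d) hd hs2 hab
    refine ⟨t, Finset.mem_filter.mpr ⟨Finset.mem_Ioo.mpr ⟨h0t, hts⟩, ?_⟩⟩
    rw [tog_eq_of_not_mem (Finset.notMem_empty t)]
    simpa using hAdm
  · exact ⟨u, F_subset_Tset hd hF hu⟩

lemma min_Tset_toggle (hd : ∀ j, j < s → d j ≠ 0) (hs2 : 2 ≤ s)
    (hab : ∀ m, 0 < m → m < s → sl Θ d 0 s ≤ sl Θ d 0 m) {F : Finset ℕ}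
    (hF : AdmissibleSet Θ d s F) (hne : (Tset Θ d s F).Nonempty) :
    AdmissibleSet Θ d s (tog ((Tset Θ d s F).min' hne) F) ∧
    ((Tset Θ d s F).min' hne) ∈ Finset.Ioo 0 s ∧
    ∀ (hne2 : (Tset Θ d s (tog ((Tset Θ d s F).min' hne) F)).Nonempty),
      (Tset Θ d s (tog ((Tset Θ d s F).min' hne) F)).min' hne2 = (Tset Θ d s F).min' hne := by
  set t := (Tset Θ d s F).min' hne with htdef
  have htT : t ∈ Tset Θ d s F := Finset.min'_mem _ _
  obtain ⟨htIoo, hAdmG⟩ := Finset.mem_filter.mp htT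
  set G := tog t F with hGdef
  have htmin : ∀ u ∈ F, t ≤ u := fun u hu => Finset.min'_le _ u (F_subset_Tset hd hF hu)
  refine ⟨hAdmG, htIoo, ?_⟩
  intro hne2
  have htTG : t ∈ Tset Θ d s G := by
    refine Finset.mem_filter.mpr ⟨htIoo, ?_⟩
    rw [hGdef, tog_tog]
    exact hF
  refine le_antisymm (Finset.min'_le _ t htTG) (Finset.le_min' _ _ _ ?_)
  intro v hv
  by_contra hlt
  push_neg at hlt
  obtain ⟨hvIoo, hvAdm⟩ := Finset.mem_filter.mp hv
  obtain ⟨h0v, hvs⟩ := Finset.mem_Ioo.mp hvIoo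
  have hvF : v ∉ F := fun hvF => absurd (htmin v hvF) (by omega)
  -- show some element < t lies in Tset F, contradicting minimality of t
  by_cases htF : t ∈ F
  · -- G = F.erase t ; use the swap lemma
    have hGe : G = F.erase t := by rw [hGdef, tog_eq_of_mem htF]
    have hvG : v ∉ G := by
      rw [hGe]
      intro hvG
      exact hvF (Finset.mem_of_mem_erase hvG)
    have hvAdm' : AdmissibleSet Θ d s (insert v (F.erase t)) := by
      rw [← hGe]
      rw [tog_eq_of_not_mem hvG] at hvAdm
      exact hvAdm
    obtain ⟨t', h0t', ht't, hAdm'⟩ := adm_swap hd hF htF htmin h0v hlt hvAdm'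
    have ht'F : t' ∉ F := fun ht'F => absurd (htmin t' ht'F) (by omega)
    have ht'T : t' ∈ Tset Θ d s F := by
      refine Finset.mem_filter.mpr ⟨Finset.mem_Ioo.mpr ⟨h0t', ?_⟩, ?_⟩
      · have := (Finset.mem_Ioo.mp htIoo).2
        omega
      · rw [tog_eq_of_not_mem ht'F]
        exact hAdm'
    have := Finset.min'_le _ t' ht'T
    omega
  · -- G = insert t F
    have hGe : G = insert t F := by rw [hGdef, tog_eq_of_not_mem htF]
    have hvG : v ∉ G := by
      rw [hGe]
      intro hvG
      rcases Finset.mem_insert.mp hvG with h | h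
      · omega
      · exact hvF h
    rw [tog_eq_of_not_mem hvG] at hvAdm
    -- erase t from insert v G = insert v (insert t F)
    have htmem : t ∈ insert v G := by
      rw [hGe]
      exact Finset.mem_insert.mpr (Or.inr (Finset.mem_insert_self t F))
    have hAdm2 := adm_erase hd hvAdm htmem
    have hset : (insert v G).erase t = insert v F := by
      rw [hGe, Finset.insert_comm, Finset.erase_insert]
      intro ht
      rcases Finset.mem_insert.mp ht with h | h
      · omega
      · exact htF h
    rw [hset] at hAdm2
    have hvT : v ∈ Tset Θ d s F := by
      refine Finset.mem_filter.mpr ⟨hvIoo, ?_⟩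
      rw [tog_eq_of_not_mem hvF]
      exact hAdm2
    have := Finset.min'_le _ v hvT
    omega

lemma main_sum_zero (hd : ∀ j, j < s → d j ≠ 0) (hs2 : 2 ≤ s)
    (hab : ∀ m, 0 < m → m < s → sl Θ d 0 s ≤ sl Θ d 0 m) :
    (∑ F ∈ (Finset.Ioo 0 s).powerset,
        if AdmissibleSet Θ d s F then (-1 : ℤ) ^ F.card else 0) = 0 := by
  classical
  refine Finset.sum_involution
    (fun F _ => if h : AdmissibleSet Θ d s F
      then tog ((Tset Θ d s F).min' (Tset_nonempty hd hs2 hab h)) F else F)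
    ?_ ?_ ?_ ?_
  · intro F hFmem
    by_cases h : AdmissibleSet Θ d s F
    · simp only [dif_pos h, if_pos h]
      obtain ⟨hAdmG, _, _⟩ := min_Tset_toggle hd hs2 hab h (Tset_nonempty hd hs2 hab h)
      rw [if_pos hAdmG, tog_sign]
      ring
    · simp only [dif_neg h, if_neg h, add_zero]
  · intro F hFmem hne0
    by_cases h : AdmissibleSet Θ d s F
    · simp only [dif_pos h]
      exact tog_ne _ _
    · rw [if_neg h] at hne0
      exact absurd rfl hne0
  · intro F hFmem
    by_cases h : AdmissibleSet Θ d s F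
    · simp only [dif_pos h]
      rw [Finset.mem_powerset] at hFmem ⊢
      obtain ⟨_, htIoo, _⟩ := min_Tset_toggle hd hs2 hab h (Tset_nonempty hd hs2 hab h)
      exact tog_subset htIoo hFmem
    · simp only [dif_neg h]
      rw [Finset.mem_powerset] at hFmem ⊢
      exact hFmem
  · intro F hFmem
    by_cases h : AdmissibleSet Θ d s F
    · obtain ⟨hAdmG, htIoo, hmin⟩ := min_Tset_toggle hd hs2 hab h (Tset_nonempty hd hs2 hab h)
      simp only [dif_pos h, dif_pos hAdmG]
      rw [hmin (Tset_nonempty hd hs2 hab hAdmG), tog_tog]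
    · simp only [dif_neg h]

end Invol

end OssaAux


/-- Lemma (Ossa): for a tuple `d* = (d 0, …, d (s-1))` of nonzero dimension
vectors of weight `d` such that either `d* = (d)` (i.e. `s = 1`) or `P(d*)`
lies strictly above the segment `P((d))` (i.e. `μ(d 0 + … + d (m-1)) > μ(d)`
for `0 < m < s`), the alternating sum `Σ_{F ∈ A(d*)} (-1)^{#F}` equals `1`
if `s = 1` and `0` otherwise. -/
theorem stmt8 {ι : Type*} [Fintype ι] (Θ : ι → ℤ) (d : ℕ → ι → ℕ) (s : ℕ)
    (hs : 1 ≤ s) (hd : ∀ j, j < s → d j ≠ 0)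
    (habove : ∀ m, 0 < m → m < s →
      yCoord Θ d m * xCoord d s > yCoord Θ d s * xCoord d m) :
    (∑ F ∈ (Finset.Ioo 0 s).powerset,
        if AdmissibleSet Θ d s F then (-1 : ℤ) ^ F.card else 0) =
      (if s = 1 then 1 else 0) := by
  have hab : ∀ m, 0 < m → m < s → OssaAux.sl Θ d 0 s ≤ OssaAux.sl Θ d 0 m := by
    intro m h0m hms
    have h := habove m h0m hms
    have hcond : (yCoord Θ d m - yCoord Θ d 0) * (xCoord d s - xCoord d 0) ≥
        (yCoord Θ d s - yCoord Θ d 0) * (xCoord d m - xCoord d 0) := by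
      rw [OssaAux.xCoord_zero, OssaAux.yCoord_zero]
      simp only [sub_zero]
      exact le_of_lt h
    exact (OssaAux.condB_iff Θ d s hd h0m hms (le_refl s)).mp hcond
  by_cases hs1 : s = 1
  · subst hs1
    have hIoo : Finset.Ioo 0 1 = (∅ : Finset ℕ) := by
      ext x
      simp only [Finset.mem_Ioo, Finset.notMem_empty, iff_false]
      omega
    rw [hIoo, Finset.powerset_empty, Finset.sum_singleton, if_pos rfl,
      if_pos (OssaAux.adm_empty hd (le_refl 1) hab)]
    simp
  · have hs2 : 2 ≤ s := by omega
    rw [if_neg hs1]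
    exact OssaAux.main_sum_zero hd hs2 hab
end

section
/- Let d* = (d^1, …, d^s) be a Harder-Narasimhan type (each d^k a nonzero semistable dimension vector with μ(d^1) > … > μ(d^s)) and let X be a representation admitting a filtration 0 = X_0 ⊆ … ⊆ X_s = X with each dim(X_k/X_{k−1}) = d^k and each X_k/X_{k−1} semistable. If U ⊆ X is any subrepresentation, then the point (dim U, Θ(dim U)) lies on or below the polygon P(d*). -/
variable {k : Type*} [Field k] {I : Type*} {Ar : Type*} {st tg : Ar → I}

variable [Fintype I]

-- telescoping over Fin
lemma tele_int {s : ℕ} (f : Fin (s + 1) → ℤ) :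
    ∑ k : Fin s, (f k.succ - f k.castSucc) = f (Fin.last s) - f 0 := by
  induction s with
  | zero => simp
  | succ n ih =>
      rw [Fin.sum_univ_castSucc]
      have h := ih (fun j => f j.castSucc)
      have h2 : ∀ k : Fin n, f (k.succ.castSucc) = f (k.castSucc.succ) := by
        intro k; rw [Fin.succ_castSucc]
      calc (∑ k : Fin n, (f (k.castSucc).succ - f (k.castSucc).castSucc))
            + (f (Fin.last n).succ - f (Fin.last n).castSucc)
          = (∑ k : Fin n, ((fun j => f j.castSucc) k.succ - (fun j => f j.castSucc) k.castSucc))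
            + (f (Fin.last n).succ - f (Fin.last n).castSucc) := by
            rfl
        _ = (f (Fin.last n).castSucc - f 0) + (f (Fin.last n).succ - f (Fin.last n).castSucc) := by
            rw [h]; simp
        _ = f (Fin.last (n + 1)) - f 0 := by
            rw [Fin.succ_last]; ring

lemma polygon_abstract {s : ℕ} (eθ en dθ dn : Fin s → ℤ)
    (hdnpos : ∀ k, 0 < dn k)
    (hen0 : ∀ k, 0 ≤ en k) (hen1 : ∀ k, en k ≤ dn k)
    (hA : ∀ k, eθ k * dn k ≤ dθ k * en k)
    (hdec : ∀ k l : Fin s, k < l → dθ l * dn k ≤ dθ k * dn l)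
    (m : Fin s) :
    ((∑ k, eθ k) - ∑ l ∈ Finset.Iio m, dθ l) * dn m ≤
      dθ m * ((∑ k, en k) - ∑ l ∈ Finset.Iio m, dn l) := by
  classical
  have key1 : ∀ k : Fin s, k < m →
      eθ k * dn m - dθ m * en k ≤ dθ k * dn m - dθ m * dn k := by
    intro kk hk
    have h1 := hA kk
    have h2 := hdec kk m hk
    have h3 : en kk ≤ dn kk := hen1 kk
    have h4 : (0:ℤ) < dn kk := hdnpos kk
    have h5 : (0:ℤ) < dn m := hdnpos m
    -- (dθ k - eθ k) * dn k ≥ dθ k * (dn k - en k)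
    have h6 : dθ kk * (dn kk - en kk) ≤ (dθ kk - eθ kk) * dn kk := by nlinarith
    have h7 : dθ m * (dn kk - en kk) * dn kk ≤ (dθ kk - eθ kk) * dn m * dn kk := by
      nlinarith [mul_le_mul_of_nonneg_left h2 (sub_nonneg.mpr h3),
        mul_le_mul_of_nonneg_left h6 (le_of_lt h5)]
    have h8 : dθ m * (dn kk - en kk) ≤ (dθ kk - eθ kk) * dn m :=
      le_of_mul_le_mul_right h7 h4
    nlinarith [h8]
  have key2 : ∀ k : Fin s, ¬ k < m → eθ k * dn m - dθ m * en k ≤ 0 := by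
    intro kk hk
    have h1 := hA kk
    have h4 : (0:ℤ) < dn kk := hdnpos kk
    have h5 : (0:ℤ) < dn m := hdnpos m
    have h2 : dθ kk * dn m ≤ dθ m * dn kk := by
      rcases eq_or_lt_of_le (not_lt.mp hk) with h | h
      · rw [← h]
      · exact hdec m kk h
    have h7 : eθ kk * dn m * dn kk ≤ dθ m * en kk * dn kk := by
      nlinarith [mul_le_mul_of_nonneg_left h2 (hen0 kk),
        mul_le_mul_of_nonneg_left h1 (le_of_lt h5)]
    have h8 : eθ kk * dn m ≤ dθ m * en kk := le_of_mul_le_mul_right h7 h4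
    linarith
  have hsplitA : ∑ k ∈ Finset.Iio m, (eθ k * dn m - dθ m * en k)
      ≤ ∑ l ∈ Finset.Iio m, (dθ l * dn m - dθ m * dn l) :=
    Finset.sum_le_sum fun k hk => key1 k (Finset.mem_Iio.mp hk)
  have hsplitB : ∑ k ∈ (Finset.Iio m)ᶜ, (eθ k * dn m - dθ m * en k) ≤ 0 :=
    Finset.sum_nonpos fun k hk => key2 k (by
      simpa [Finset.mem_Iio] using (Finset.mem_compl.mp hk))
  have htot := Finset.sum_add_sum_compl (Finset.Iio m)
    (fun k => eθ k * dn m - dθ m * en k)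
  have e1 : ∑ k, (eθ k * dn m - dθ m * en k)
      = (∑ k, eθ k) * dn m - dθ m * (∑ k, en k) := by
    rw [Finset.sum_sub_distrib, ← Finset.sum_mul, ← Finset.mul_sum]
  have e2 : ∑ l ∈ Finset.Iio m, (dθ l * dn m - dθ m * dn l)
      = (∑ l ∈ Finset.Iio m, dθ l) * dn m - dθ m * (∑ l ∈ Finset.Iio m, dn l) := by
    rw [Finset.sum_sub_distrib, ← Finset.sum_mul, ← Finset.mul_sum]
  rw [sub_mul, mul_sub]
  linarith [hsplitA, hsplitB, htot, e1, e2]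


lemma slope_cross {I : Type*} [Fintype I] (Θ : I → ℤ) (e dd : I → ℕ)
    (he : 0 < ∑ i, (e i : ℤ)) (hd : 0 < ∑ i, (dd i : ℤ))
    (h : (∑ i, (Θ i : ℚ) * e i) / (∑ i, (e i : ℚ)) ≤
         (∑ i, (Θ i : ℚ) * dd i) / (∑ i, (dd i : ℚ))) :
    (∑ i, Θ i * (e i : ℤ)) * (∑ i, (dd i : ℤ)) ≤
      (∑ i, Θ i * (dd i : ℤ)) * (∑ i, (e i : ℤ)) := by
  have he' : (0 : ℚ) < ∑ i, (e i : ℚ) := by exact_mod_cast he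
  have hd' : (0 : ℚ) < ∑ i, (dd i : ℚ) := by exact_mod_cast hd
  rw [div_le_div_iff₀ he' hd'] at h
  have : ((∑ i, Θ i * (e i : ℤ) : ℤ) : ℚ) * ((∑ i, (dd i : ℤ) : ℤ) : ℚ) ≤
      ((∑ i, Θ i * (dd i : ℤ) : ℤ) : ℚ) * ((∑ i, (e i : ℤ) : ℤ) : ℚ) := by
    push_cast
    convert h using 2
  exact_mod_cast this

/-- If `X` admits a filtration `0 = F 0 ⊆ … ⊆ F s = X` of HN type
`d* = (d 0, …, d (s-1))` (semistable subquotients of dimension vectors `d m`,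
strictly decreasing slopes), then for every subrepresentation `U ⊆ X` the
point `(dim U, Θ(dim U))` lies on or below the polygon `P(d*)`: for every
segment `m` of the polygon, it lies on or below the affine line through
that segment. -/
theorem stmt17 (Θ : I → ℤ) (X : QRep k st tg) (s : ℕ) (d : Fin s → I → ℕ)
    (hd : ∀ m, d m ≠ 0)
    (hμss : ∀ m, ∃ Y : QRep k st tg, Semistable Θ Y ∧
      (fun i => Module.finrank k (Y.V i)) = d m)
    (F : Fin (s + 1) → ∀ i, Submodule k (X.V i))
    (hsub : ∀ m, IsSubrep X (F m))
    (hmono : ∀ (m : Fin s) i, F m.castSucc i ≤ F m.succ i)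
    (h0 : F 0 = fun _ => ⊥) (hlast : F (Fin.last s) = fun _ => ⊤)
    (hdim : ∀ (m : Fin s) i,
      Module.finrank k (F m.succ i) = Module.finrank k (F m.castSucc i) + d m i)
    (hss : ∀ m : Fin s, PairSemistable Θ X (F m.castSucc) (F m.succ))
    (hdec : ∀ m l : Fin s, m < l → slopeVec Θ (d m) > slopeVec Θ (d l))
    (U : ∀ i, Submodule k (X.V i)) (hU : IsSubrep X U) :
    ∀ m : Fin s,
      ((∑ i, Θ i * (Module.finrank k (U i) : ℤ)) -
          ∑ l ∈ Finset.Iio m, ∑ i, Θ i * (d l i : ℤ)) * (∑ i, (d m i : ℤ)) ≤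
      (∑ i, Θ i * (d m i : ℤ)) *
        ((∑ i, (Module.finrank k (U i) : ℤ)) -
          ∑ l ∈ Finset.Iio m, ∑ i, (d l i : ℤ)) := by
  classical
  intro m
  -- positivity of the dimension-vector sums
  have hdn : ∀ kk : Fin s, 0 < ∑ i, (d kk i : ℤ) := by
    intro kk
    obtain ⟨i0, hi0⟩ := Function.ne_iff.mp (hd kk)
    refine Finset.sum_pos' (fun i _ => by positivity) ⟨i0, Finset.mem_univ _, ?_⟩
    have : 0 < d kk i0 := Nat.pos_of_ne_zero (by simpa using hi0)
    exact_mod_cast this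
  -- the intersection filtration of U
  have hle : ∀ (kk : Fin s) (i : I),
      Module.finrank k ↥(U i ⊓ F kk.castSucc i) ≤ Module.finrank k ↥(U i ⊓ F kk.succ i) :=
    fun kk i => Submodule.finrank_mono (inf_le_inf_left _ (hmono kk i))
  have hrk : ∀ (kk : Fin s) (i : I),
      Module.finrank k ↥((U i ⊓ F kk.succ i) ⊔ F kk.castSucc i) +
        Module.finrank k ↥(U i ⊓ F kk.castSucc i)
      = Module.finrank k ↥(U i ⊓ F kk.succ i) + Module.finrank k ↥(F kk.castSucc i) := by
    intro kk i
    have h1 := Submodule.finrank_sup_add_finrank_inf_eq (U i ⊓ F kk.succ i) (F kk.castSucc i)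
    have h2 : (U i ⊓ F kk.succ i) ⊓ F kk.castSucc i = U i ⊓ F kk.castSucc i := by
      rw [inf_assoc, inf_eq_right.mpr (hmono kk i)]
    rw [h2] at h1
    exact h1
  have hub : ∀ (kk : Fin s) (i : I),
      Module.finrank k ↥(U i ⊓ F kk.succ i) ≤
        Module.finrank k ↥(U i ⊓ F kk.castSucc i) + d kk i := by
    intro kk i
    have h1 : Module.finrank k ↥((U i ⊓ F kk.succ i) ⊔ F kk.castSucc i) ≤
        Module.finrank k ↥(F kk.succ i) :=
      Submodule.finrank_mono (sup_le inf_le_right (hmono kk i))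
    have h2 := hrk kk i
    have h3 := hdim kk i
    omega
  -- the key semistability estimate for each step
  have keyA : ∀ kk : Fin s,
      (∑ i, Θ i * ((Module.finrank k ↥(U i ⊓ F kk.succ i) : ℤ) -
          (Module.finrank k ↥(U i ⊓ F kk.castSucc i) : ℤ))) * (∑ i, (d kk i : ℤ)) ≤
      (∑ i, Θ i * (d kk i : ℤ)) *
        (∑ i, ((Module.finrank k ↥(U i ⊓ F kk.succ i) : ℤ) -
          (Module.finrank k ↥(U i ⊓ F kk.castSucc i) : ℤ))) := by
    intro kk
    by_cases hcase : ∀ i, Module.finrank k ↥(U i ⊓ F kk.succ i) =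
        Module.finrank k ↥(U i ⊓ F kk.castSucc i)
    · have hz : ∀ i : I, ((Module.finrank k ↥(U i ⊓ F kk.succ i) : ℤ) -
          (Module.finrank k ↥(U i ⊓ F kk.castSucc i) : ℤ)) = 0 := by
        intro i; rw [hcase i]; ring
      simp [hz]
    · push_neg at hcase
      set T : ∀ i, Submodule k (X.V i) := fun i => (U i ⊓ F kk.succ i) ⊔ F kk.castSucc i with hTdef
      have hT : IsSubrep X T := by
        intro a
        simp only [hTdef, Submodule.map_sup]
        apply sup_le
        · exact le_trans (le_inf
            (le_trans (Submodule.map_mono inf_le_left) (hU a))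
            (le_trans (Submodule.map_mono inf_le_right) (hsub kk.succ a))) le_sup_left
        · exact le_trans (hsub kk.castSucc a) le_sup_right
      have hTW : ∀ i, F kk.castSucc i ≤ T i := fun i => le_sup_right
      have hTU : ∀ i, T i ≤ F kk.succ i := fun i => sup_le inf_le_right (hmono kk i)
      have hTne : T ≠ F kk.castSucc := by
        intro hEq
        obtain ⟨i0, hne⟩ := hcase
        have h1 := hrk kk i0
        have h2 : (U i0 ⊓ F kk.succ i0) ⊔ F kk.castSucc i0 = F kk.castSucc i0 := by
          have h3 := congrFun hEq i0
          simpa [hTdef] using h3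
        rw [h2] at h1
        omega
      have hslope := (hss kk).2 T hT hTW hTU hTne
      have hv1 : (fun i => Module.finrank k ↥(T i) - Module.finrank k ↥(F kk.castSucc i))
          = (fun i => Module.finrank k ↥(U i ⊓ F kk.succ i) -
              Module.finrank k ↥(U i ⊓ F kk.castSucc i)) := by
        funext i
        have h1 := hrk kk i
        have h2 : Module.finrank k ↥(T i) =
            Module.finrank k ↥((U i ⊓ F kk.succ i) ⊔ F kk.castSucc i) := by rw [hTdef]
        have h3 : Module.finrank k ↥(F kk.castSucc i) ≤ Module.finrank k ↥(T i) :=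
          Submodule.finrank_mono (hTW i)
        omega
      have hv2 : (fun i => Module.finrank k ↥(F kk.succ i) -
          Module.finrank k ↥(F kk.castSucc i)) = d kk := by
        funext i
        have := hdim kk i
        omega
      rw [hv1, hv2] at hslope
      unfold slopeVec at hslope
      have hepos : 0 < ∑ i, ((Module.finrank k ↥(U i ⊓ F kk.succ i) -
          Module.finrank k ↥(U i ⊓ F kk.castSucc i) : ℕ) : ℤ) := by
        obtain ⟨i0, hne⟩ := hcase
        refine Finset.sum_pos' (fun i _ => by positivity) ⟨i0, Finset.mem_univ _, ?_⟩
        have h1 := hle kk i0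
        have : 0 < Module.finrank k ↥(U i0 ⊓ F kk.succ i0) -
            Module.finrank k ↥(U i0 ⊓ F kk.castSucc i0) := by omega
        exact_mod_cast this
      have hcross := slope_cross Θ
        (fun i => Module.finrank k ↥(U i ⊓ F kk.succ i) -
          Module.finrank k ↥(U i ⊓ F kk.castSucc i)) (d kk) hepos (hdn kk) hslope
      have hc1 : ∀ i : I, ((Module.finrank k ↥(U i ⊓ F kk.succ i) -
          Module.finrank k ↥(U i ⊓ F kk.castSucc i) : ℕ) : ℤ)
          = (Module.finrank k ↥(U i ⊓ F kk.succ i) : ℤ) -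
            (Module.finrank k ↥(U i ⊓ F kk.castSucc i) : ℤ) := by
        intro i
        have := hle kk i
        omega
      calc (∑ i, Θ i * ((Module.finrank k ↥(U i ⊓ F kk.succ i) : ℤ) -
              (Module.finrank k ↥(U i ⊓ F kk.castSucc i) : ℤ))) * (∑ i, (d kk i : ℤ))
          = (∑ i, Θ i * ((Module.finrank k ↥(U i ⊓ F kk.succ i) -
              Module.finrank k ↥(U i ⊓ F kk.castSucc i) : ℕ) : ℤ)) * (∑ i, (d kk i : ℤ)) := by
            congr 1
            exact Finset.sum_congr rfl fun i _ => by rw [hc1 i]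
        _ ≤ (∑ i, Θ i * (d kk i : ℤ)) * (∑ i, ((Module.finrank k ↥(U i ⊓ F kk.succ i) -
              Module.finrank k ↥(U i ⊓ F kk.castSucc i) : ℕ) : ℤ)) := hcross
        _ = (∑ i, Θ i * (d kk i : ℤ)) *
              (∑ i, ((Module.finrank k ↥(U i ⊓ F kk.succ i) : ℤ) -
                (Module.finrank k ↥(U i ⊓ F kk.castSucc i) : ℤ))) := by
            congr 1
            exact Finset.sum_congr rfl fun i _ => hc1 i
  -- telescoping functions
  set f : Fin (s + 1) → ℤ :=
    fun mm => ∑ i, Θ i * (Module.finrank k ↥(U i ⊓ F mm i) : ℤ) with hfdef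
  set g : Fin (s + 1) → ℤ :=
    fun mm => ∑ i, (Module.finrank k ↥(U i ⊓ F mm i) : ℤ) with hgdef
  have hb0 : ∀ i : I, U i ⊓ F 0 i = ⊥ := fun i => by
    rw [congrFun h0 i]; exact inf_bot_eq _
  have hbl : ∀ i : I, U i ⊓ F (Fin.last s) i = U i := fun i => by
    rw [congrFun hlast i]; exact inf_top_eq _
  have hf0 : f 0 = 0 := by
    rw [hfdef]
    refine Finset.sum_eq_zero fun i _ => ?_
    rw [hb0 i]
    simp
  have hg0 : g 0 = 0 := by
    rw [hgdef]
    refine Finset.sum_eq_zero fun i _ => ?_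
    rw [hb0 i]
    simp
  have hflast : f (Fin.last s) = ∑ i, Θ i * (Module.finrank k ↥(U i) : ℤ) := by
    rw [hfdef]
    refine Finset.sum_congr rfl fun i _ => ?_
    rw [hbl i]
  have hglast : g (Fin.last s) = ∑ i, (Module.finrank k ↥(U i) : ℤ) := by
    rw [hgdef]
    refine Finset.sum_congr rfl fun i _ => ?_
    rw [hbl i]
  have hfsub : ∀ kk : Fin s, f kk.succ - f kk.castSucc =
      ∑ i, Θ i * ((Module.finrank k ↥(U i ⊓ F kk.succ i) : ℤ) -
        (Module.finrank k ↥(U i ⊓ F kk.castSucc i) : ℤ)) := by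
    intro kk
    simp only [hfdef]
    rw [← Finset.sum_sub_distrib]
    exact Finset.sum_congr rfl fun i _ => by ring
  have hgsub : ∀ kk : Fin s, g kk.succ - g kk.castSucc =
      ∑ i, ((Module.finrank k ↥(U i ⊓ F kk.succ i) : ℤ) -
        (Module.finrank k ↥(U i ⊓ F kk.castSucc i) : ℤ)) := by
    intro kk
    simp only [hgdef]
    rw [← Finset.sum_sub_distrib]
  have habs := polygon_abstract
    (fun kk => f kk.succ - f kk.castSucc)
    (fun kk => g kk.succ - g kk.castSucc)
    (fun kk => ∑ i, Θ i * (d kk i : ℤ))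
    (fun kk => ∑ i, (d kk i : ℤ))
    hdn
    (by
      intro kk
      simp only [hgdef]
      have : ∀ i : I, ((Module.finrank k ↥(U i ⊓ F kk.castSucc i)) : ℤ) ≤
          ((Module.finrank k ↥(U i ⊓ F kk.succ i)) : ℤ) := fun i => by exact_mod_cast hle kk i
      have hs := Finset.sum_le_sum (fun i (_ : i ∈ Finset.univ) => this i)
      linarith)
    (by
      intro kk
      simp only [hgdef]
      have : ∀ i : I, ((Module.finrank k ↥(U i ⊓ F kk.succ i)) : ℤ) ≤
          ((Module.finrank k ↥(U i ⊓ F kk.castSucc i)) : ℤ) + (d kk i : ℤ) := by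
        intro i; exact_mod_cast hub kk i
      have hs := Finset.sum_le_sum (fun i (_ : i ∈ Finset.univ) => this i)
      rw [Finset.sum_add_distrib] at hs
      linarith)
    (by
      intro kk
      rw [hfsub kk, hgsub kk]
      exact keyA kk)
    (by
      intro kk ll hkl
      have hsl := (hdec kk ll hkl).le
      unfold slopeVec at hsl
      exact slope_cross Θ (d ll) (d kk) (hdn ll) (hdn kk) hsl)
    m
  have htelf := tele_int f
  have htelg := tele_int g
  rw [htelf, htelg, hf0, hg0, hflast, hglast, sub_zero, sub_zero] at habs
  exact habs
end

section
/- For the quiver i → j → k with dimension vector d = i + j + k and weight Θ = 2i* + 3j*, the representation space R_d ≅ k², with a point (x,y) corresponding to the representation k →^x k →^y k, decomposes into HN strata as follows: the stratum of HN type (i, j+k) is k*×{0}, the stratum of HN type (j, i, k) is {0}×k, and consequently the closure of the stratum of type (i, j+k), which is k×{0}, is not a union of HN strata but is contained in the union of the two strata above. -/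
variable {k : Type*} [Field k] {I : Type*} {Ar : Type*} {st tg : Ar → I}

variable [Fintype I]

/-- The source map of the quiver `i → j → k` (vertices `0,1,2`). -/
def srcA3 : Fin 2 → Fin 3 := ![0, 1]
/-- The target map of the quiver `i → j → k`. -/
def tgtA3 : Fin 2 → Fin 3 := ![1, 2]
/-- The weight `Θ = 2 i^* + 3 j^*`. -/
def ΘA3 : Fin 3 → ℤ := ![2, 3, 0]

/-- The representation of the quiver `i → j → k` corresponding to the point
`(x, y) ∈ ℂ²` (with the identification of `R_d` with `ℂ²` used in the paper's
example: under it the stratum of type `(i, j+k)` is `ℂ^* × {0}`). -/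
noncomputable def repA3 (x y : ℂ) : QRep ℂ srcA3 tgtA3 where
  V := fun _ => ℂ
  f := fun a =>
    Fin.cases (motive := fun _ => ℂ →ₗ[ℂ] ℂ)
      (y • LinearMap.id) (fun _ => x • LinearMap.id) a

/-- `X` has a Harder-Narasimhan filtration of type `L = (L 0, …)`: a
filtration by subrepresentations with semistable subquotients of dimension
vectors given by `L` and strictly decreasing slopes. -/
def HasHNType (X : QRep ℂ srcA3 tgtA3) (L : List (Fin 3 → ℕ)) : Prop :=
  ∃ F : ℕ → ∀ i, Submodule ℂ (X.V i),
    (∀ n, IsSubrep X (F n)) ∧ (∀ n i, F n i ≤ F (n + 1) i) ∧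
    (F 0 = fun _ => ⊥) ∧ (F L.length = fun _ => ⊤) ∧
    (∀ m : Fin L.length,
      PairSemistable ΘA3 X (F m) (F ((m : ℕ) + 1)) ∧
      ∀ i, Module.finrank ℂ (F ((m : ℕ) + 1) i) =
        Module.finrank ℂ (F (m : ℕ) i) + L.get m i) ∧
    (∀ p q : Fin L.length, p < q →
      slopeVec ΘA3 (L.get p) > slopeVec ΘA3 (L.get q))

-- helpers
lemma sub_cc (U : Submodule ℂ ℂ) : U = ⊥ ∨ U = ⊤ := (Ideal.eq_bot_or_top U)

lemma fr_bot : Module.finrank ℂ (⊥ : Submodule ℂ ℂ) = 0 := finrank_bot ℂ ℂ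
lemma fr_top : Module.finrank ℂ (⊤ : Submodule ℂ ℂ) = 1 := by
  rw [finrank_top]; exact Module.finrank_self ℂ

lemma slope3 (Θ : Fin 3 → ℤ) (d : Fin 3 → ℕ) :
    slopeVec Θ d = ((Θ 0 : ℚ) * d 0 + Θ 1 * d 1 + Θ 2 * d 2) / ((d 0 : ℚ) + d 1 + d 2) := by
  simp [slopeVec, Fin.sum_univ_three]


attribute [reducible] repA3

lemma repA3_V (x y : ℂ) (i : Fin 3) : (repA3 x y).V i = ℂ := rfl

lemma repA3_f0 (x y : ℂ) : (repA3 x y).f 0 = y • LinearMap.id := rfl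
lemma repA3_f1 (x y : ℂ) : (repA3 x y).f 1 = x • LinearMap.id := rfl

example : srcA3 0 = 0 ∧ srcA3 1 = 1 ∧ tgtA3 0 = 1 ∧ tgtA3 1 = 2 := by
  refine ⟨rfl, rfl, rfl, rfl⟩

lemma isSubrep_iff (x y : ℂ) (U : ∀ i : Fin 3, Submodule ℂ ℂ) :
    IsSubrep (repA3 x y) U ↔
      (Submodule.map (y • LinearMap.id) (U 0) ≤ U 1) ∧
      (Submodule.map (x • LinearMap.id) (U 1) ≤ U 2) := by
  constructor
  · intro h; exact ⟨h 0, h 1⟩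
  · rintro ⟨h0, h1⟩ a
    fin_cases a
    · exact h0
    · exact h1
lemma map_smul_le_top (c : ℂ) (U : Submodule ℂ ℂ) (W : Submodule ℂ ℂ) (hW : W = ⊤) :
    Submodule.map (c • LinearMap.id) U ≤ W := hW ▸ le_top

lemma map_zero_smul (U W : Submodule ℂ ℂ) :
    Submodule.map ((0:ℂ) • (LinearMap.id : ℂ →ₗ[ℂ] ℂ)) U ≤ W := by
  rw [zero_smul, Submodule.map_zero]; exact bot_le

lemma map_of_bot (c : ℂ) (W : Submodule ℂ ℂ) :
    Submodule.map (c • (LinearMap.id : ℂ →ₗ[ℂ] ℂ)) ⊥ ≤ W := by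
  rw [Submodule.map_bot]; exact bot_le

lemma eq_zero_of_map_le_bot (c : ℂ)
    (h : Submodule.map (c • (LinearMap.id : ℂ →ₗ[ℂ] ℂ)) ⊤ ≤ ⊥) : c = 0 := by
  have : c ∈ (⊥ : Submodule ℂ ℂ) := h ⟨1, trivial, by simp⟩
  simpa using this

lemma top_of_map (c : ℂ) (hc : c ≠ 0) (W : Submodule ℂ ℂ)
    (h : Submodule.map (c • (LinearMap.id : ℂ →ₗ[ℂ] ℂ)) ⊤ ≤ W) : W = ⊤ := by
  rcases sub_cc W with rfl | rfl
  · exact absurd (eq_zero_of_map_le_bot c h) hc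
  · rfl

lemma bt : (⊥ : Submodule ℂ ℂ) ≠ ⊤ := by simp

lemma slope_congr (Θ : Fin 3 → ℤ) (d e : Fin 3 → ℕ) (h : ∀ i, d i = e i) :
    slopeVec Θ d = slopeVec Θ e := by
  rw [slope3, slope3, h 0, h 1, h 2]

lemma fr_eq_one (U : Submodule ℂ ℂ) (h : Module.finrank ℂ U = 1) : U = ⊤ := by
  rcases sub_cc U with rfl | rfl
  · rw [fr_bot] at h; omega
  · rfl

lemma fr_eq_zero (U : Submodule ℂ ℂ) (h : Module.finrank ℂ U = 0) : U = ⊥ := by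
  rcases sub_cc U with rfl | rfl
  · rfl
  · rw [fr_top] at h; omega

lemma slope_eval (d : Fin 3 → ℕ) (a b c : ℕ) (h0 : d 0 = a) (h1 : d 1 = b) (h2 : d 2 = c) :
    slopeVec ΘA3 d = ((2*a + 3*b : ℚ)) / (a + b + c) := by
  rw [slope3, h0, h1, h2]; norm_num [ΘA3, Matrix.cons_val_two]

noncomputable def W100 : Fin 3 → Submodule ℂ ℂ := ![⊤,⊥,⊥]
noncomputable def W010 : Fin 3 → Submodule ℂ ℂ := ![⊥,⊤,⊥]
noncomputable def W110 : Fin 3 → Submodule ℂ ℂ := ![⊤,⊤,⊥]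

@[simp] lemma W100_0 : W100 0 = ⊤ := Eq.trans rfl rfl
@[simp] lemma W100_1 : W100 1 = ⊥ := Eq.trans rfl rfl
@[simp] lemma W100_2 : W100 2 = ⊥ := Eq.trans rfl rfl
@[simp] lemma W010_0 : W010 0 = ⊥ := Eq.trans rfl rfl
@[simp] lemma W010_1 : W010 1 = ⊤ := Eq.trans rfl rfl
@[simp] lemma W010_2 : W010 2 = ⊥ := Eq.trans rfl rfl
@[simp] lemma W110_0 : W110 0 = ⊤ := Eq.trans rfl rfl
@[simp] lemma W110_1 : W110 1 = ⊤ := Eq.trans rfl rfl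
@[simp] lemma W110_2 : W110 2 = ⊥ := Eq.trans rfl rfl

@[simp] lemma frW100 (i : Fin 3) : Module.finrank ℂ (W100 i) = ![1, 0, 0] i := by
  fin_cases i
  · exact fr_top
  · exact fr_bot
  · exact fr_bot
@[simp] lemma frW010 (i : Fin 3) : Module.finrank ℂ (W010 i) = ![0, 1, 0] i := by
  fin_cases i
  · exact fr_bot
  · exact fr_top
  · exact fr_bot
@[simp] lemma frW110 (i : Fin 3) : Module.finrank ℂ (W110 i) = ![1, 1, 0] i := by
  fin_cases i
  · exact fr_top
  · exact fr_top
  · exact fr_bot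

lemma frV (x y : ℂ) (i : Fin 3) : Module.finrank ℂ ((repA3 x y).V i) = 1 :=
  Module.finrank_self ℂ

lemma fr_topV (x y : ℂ) (i : Fin 3) :
    Module.finrank ℂ (⊤ : Submodule ℂ ((repA3 x y).V i)) = 1 := fr_top

lemma pss0 (x y : ℂ) : PairSemistable ΘA3 (repA3 x y) (fun _ => ⊥) W100 := by
  constructor
  · intro h; exact bt (congrFun h 0)
  · intro T _ hWT hTU hTW
    have h1 : T 1 = ⊥ := le_bot_iff.mp (hTU 1)
    have h2 : T 2 = ⊥ := le_bot_iff.mp (hTU 2)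
    have h0 : T 0 = ⊤ := by
      rcases sub_cc (T 0) with h | h
      · exact absurd (funext fun i => by fin_cases i <;> assumption) hTW
      · exact h
    rw [slope_eval _ 1 0 0 (by rw [h0]; simp [frV]) (by simp [h1]) (by simp [h2]),
        slope_eval _ 1 0 0 (by simp [frV]) (by simp) (by simp)]

lemma pss1 (x y : ℂ) (hx : x ≠ 0) :
    PairSemistable ΘA3 (repA3 x y) W100 (fun _ => ⊤) := by
  constructor
  · intro h; exact bt (congrFun h 1)
  · intro T hT hWT hTU hTW
    have h0 : T 0 = ⊤ := top_le_iff.mp (hWT 0)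
    have hsub := (isSubrep_iff x y T).mp hT
    have h12 : (T 1 = ⊥ ∧ T 2 = ⊥) ∨ (T 1 = ⊥ ∧ T 2 = ⊤) ∨ (T 1 = ⊤ ∧ T 2 = ⊤) := by
      rcases sub_cc (T 1) with h1 | h1 <;> rcases sub_cc (T 2) with h2 | h2
      · exact Or.inl ⟨h1, h2⟩
      · exact Or.inr (Or.inl ⟨h1, h2⟩)
      · exfalso
        have hm := hsub.2
        rw [h1, h2] at hm
        exact hx (eq_zero_of_map_le_bot x hm)
      · exact Or.inr (Or.inr ⟨h1, h2⟩)
    rcases h12 with ⟨h1, h2⟩ | ⟨h1, h2⟩ | ⟨h1, h2⟩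
    · exfalso; apply hTW; funext i
      fin_cases i
      · exact h0.trans rfl
      · exact h1.trans rfl
      · exact h2.trans rfl
    · rw [slope_eval _ 0 0 1 (by rw [h0]; simp [frV]) (by rw [h1]; simp)
          (by rw [h2]; simp [frV]),
        slope_eval _ 0 1 1 (by simp [frV]) (by simp [frV]) (by simp [frV])]
      norm_num
    · rw [slope_eval _ 0 1 1 (by rw [h0]; simp [frV]) (by rw [h1]; simp [frV])
          (by rw [h2]; simp [frV]),
        slope_eval _ 0 1 1 (by simp [frV]) (by simp [frV]) (by simp [frV])]

lemma pss2a (x y : ℂ) : PairSemistable ΘA3 (repA3 x y) (fun _ => ⊥) W010 := by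
  constructor
  · intro h; exact bt (congrFun h 1)
  · intro T _ hWT hTU hTW
    have h0 : T 0 = ⊥ := le_bot_iff.mp (hTU 0)
    have h2 : T 2 = ⊥ := le_bot_iff.mp (hTU 2)
    have h1 : T 1 = ⊤ := by
      rcases sub_cc (T 1) with h | h
      · exfalso; apply hTW; funext i
        fin_cases i
        · exact h0.trans rfl
        · exact h.trans rfl
        · exact h2.trans rfl
      · exact h
    rw [slope_eval _ 0 1 0 (by rw [h0]; simp) (by rw [h1]; simp [frV]) (by rw [h2]; simp),
        slope_eval _ 0 1 0 (by simp) (by simp [frV]) (by simp)]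

lemma pss2b (x y : ℂ) : PairSemistable ΘA3 (repA3 x y) W010 W110 := by
  constructor
  · intro h; exact bt (congrFun h 0)
  · intro T _ hWT hTU hTW
    have h1 : T 1 = ⊤ := top_le_iff.mp (hWT 1)
    have h2 : T 2 = ⊥ := le_bot_iff.mp (hTU 2)
    have h0 : T 0 = ⊤ := by
      rcases sub_cc (T 0) with h | h
      · exfalso; apply hTW; funext i
        fin_cases i
        · exact h.trans rfl
        · exact h1.trans rfl
        · exact h2.trans rfl
      · exact h
    rw [slope_eval _ 1 0 0 (by rw [h0]; simp [frV]) (by rw [h1]; simp [frV]) (by rw [h2]; simp),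
        slope_eval _ 1 0 0 (by simp [frV]) (by simp [frV]) (by simp)]

lemma pss2c (x y : ℂ) : PairSemistable ΘA3 (repA3 x y) W110 (fun _ => ⊤) := by
  constructor
  · intro h; exact bt (congrFun h 2)
  · intro T _ hWT hTU hTW
    have h0 : T 0 = ⊤ := top_le_iff.mp (hWT 0)
    have h1 : T 1 = ⊤ := top_le_iff.mp (hWT 1)
    have h2 : T 2 = ⊤ := by
      rcases sub_cc (T 2) with h | h
      · exfalso; apply hTW; funext i
        fin_cases i
        · exact h0.trans rfl
        · exact h1.trans rfl
        · exact h.trans rfl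
      · exact h
    rw [slope_eval _ 0 0 1 (by rw [h0]; simp [frV]) (by rw [h1]; simp [frV])
          (by rw [h2]; simp [frV]),
        slope_eval _ 0 0 1 (by simp [frV]) (by simp [frV]) (by simp [frV])]

noncomputable def Fa : ℕ → Fin 3 → Submodule ℂ ℂ
  | 0 => fun _ => ⊥
  | 1 => W100
  | _+2 => fun _ => ⊤

noncomputable def Fb : ℕ → Fin 3 → Submodule ℂ ℂ
  | 0 => fun _ => ⊥
  | 1 => W010
  | 2 => W110
  | _+3 => fun _ => ⊤

lemma hn1_of (x : ℂ) (hx : x ≠ 0) : HasHNType (repA3 x 0) [![1,0,0], ![0,1,1]] := by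
  refine ⟨Fa, ?_, ?_, rfl, rfl, ?_, ?_⟩
  · intro n
    rcases n with _ | _ | n
    · intro a; exact le_trans (le_of_eq (Submodule.map_bot _)) bot_le
    · rw [isSubrep_iff]
      exact ⟨map_zero_smul _ _, map_of_bot _ _⟩
    · intro a; exact le_top
  · intro n i
    rcases n with _ | _ | n
    · exact bot_le
    · exact le_top
    · exact le_top
  · intro m
    fin_cases m
    · refine ⟨pss0 x 0, ?_⟩
      have e : ∀ j : Fin 3, Module.finrank ℂ (W100 j) =
          Module.finrank ℂ ((⊥ : Submodule ℂ ℂ)) + ![1,0,0] j := by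
        intro j; fin_cases j <;> simp [frV]
      exact e
    · refine ⟨pss1 x 0 hx, ?_⟩
      have e : ∀ j : Fin 3, Module.finrank ℂ ((⊤ : Submodule ℂ ℂ)) =
          Module.finrank ℂ (W100 j) + ![0,1,1] j := by
        intro j; fin_cases j <;> simp [frV]
      exact e
  · intro p q hpq
    fin_cases p <;> fin_cases q <;> simp_all
    · rw [slope_eval _ 0 1 1 rfl rfl rfl, slope_eval _ 1 0 0 rfl rfl rfl]; norm_num

lemma hn2_of (y : ℂ) : HasHNType (repA3 0 y) [![0,1,0], ![1,0,0], ![0,0,1]] := by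
  refine ⟨Fb, ?_, ?_, rfl, rfl, ?_, ?_⟩
  · intro n
    rcases n with _ | _ | _ | n
    · intro a; exact le_trans (le_of_eq (Submodule.map_bot _)) bot_le
    · rw [isSubrep_iff]
      exact ⟨map_of_bot _ _, map_zero_smul _ _⟩
    · rw [isSubrep_iff]
      exact ⟨le_top, map_zero_smul _ _⟩
    · intro a; exact le_top
  · intro n i
    rcases n with _ | _ | _ | n
    · exact bot_le
    · fin_cases i
      · exact bot_le
      · exact le_top
      · exact bot_le
    · exact le_top
    · exact le_top
  · intro m
    fin_cases m
    · refine ⟨pss2a 0 y, ?_⟩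
      have e : ∀ j : Fin 3, Module.finrank ℂ (W010 j) =
          Module.finrank ℂ ((⊥ : Submodule ℂ ℂ)) + ![0,1,0] j := by
        intro j; fin_cases j <;> simp [frV]
      exact e
    · refine ⟨pss2b 0 y, ?_⟩
      have e : ∀ j : Fin 3, Module.finrank ℂ (W110 j) =
          Module.finrank ℂ (W010 j) + ![1,0,0] j := by
        intro j; fin_cases j <;> simp [frV]
      exact e
    · refine ⟨pss2c 0 y, ?_⟩
      have e : ∀ j : Fin 3, Module.finrank ℂ ((⊤ : Submodule ℂ ℂ)) =
          Module.finrank ℂ (W110 j) + ![0,0,1] j := by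
        intro j; fin_cases j <;> simp [frV]
      exact e
  · intro p q hpq
    fin_cases p <;> fin_cases q <;> simp_all
    · rw [slope_eval _ 1 0 0 rfl rfl rfl, slope_eval _ 0 1 0 rfl rfl rfl]; norm_num
    · rw [slope_eval _ 0 0 1 rfl rfl rfl, slope_eval _ 0 1 0 rfl rfl rfl]; norm_num
    · rw [slope_eval _ 0 0 1 rfl rfl rfl, slope_eval _ 1 0 0 rfl rfl rfl]; norm_num

lemma hn1_inv (x y : ℂ) (h : HasHNType (repA3 x y) [![1,0,0], ![0,1,1]]) :
    x ≠ 0 ∧ y = 0 := by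
  obtain ⟨F, hsub, hmono, h0, htop, hstep, hdec⟩ := h
  have hq : ∀ i, Module.finrank ℂ (F 1 i) = Module.finrank ℂ (F 0 i) + ![1,0,0] i :=
    (hstep ⟨0, by norm_num⟩).2
  have hF0 : ∀ i, Module.finrank ℂ (F 0 i) = 0 := by
    intro i; rw [congrFun h0 i]; exact fr_bot
  have r0 : Module.finrank ℂ (F 1 0) = 1 := by rw [hq 0, hF0 0]; rfl
  have r1 : Module.finrank ℂ (F 1 1) = 0 := by rw [hq 1, hF0 1]; rfl
  have r2 : Module.finrank ℂ (F 1 2) = 0 := by rw [hq 2, hF0 2]; rfl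
  have e0 : F 1 0 = ⊤ := fr_eq_one _ r0
  have e1 : F 1 1 = ⊥ := fr_eq_zero _ r1
  have e2 : F 1 2 = ⊥ := fr_eq_zero _ r2
  have hy : y = 0 := by
    have hs := ((isSubrep_iff x y (F 1)).mp (hsub 1)).1
    rw [e0, e1] at hs
    exact eq_zero_of_map_le_bot y hs
  refine ⟨?_, hy⟩
  intro hx
  have hF2 : ∀ i, F 2 i = ⊤ := fun i => congrFun htop i
  have key : slopeVec ΘA3 (fun i => Module.finrank ℂ (W110 i) - Module.finrank ℂ (F 1 i)) ≤
      slopeVec ΘA3 (fun i => Module.finrank ℂ (F 2 i) - Module.finrank ℂ (F 1 i)) := by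
    refine (hstep ⟨1, by norm_num⟩).1.2 W110 ?_ ?_ ?_ ?_
    · rw [isSubrep_iff]
      refine ⟨le_top, ?_⟩
      rw [hx]; exact map_zero_smul _ _
    · intro i
      fin_cases i
      · exact le_of_eq (e0.trans rfl)
      · exact e1.trans_le bot_le
      · exact e2.trans_le bot_le
    · intro i; exact le_top.trans_eq (hF2 i).symm
    · intro hc
      exact bt ((congrFun hc 1).trans e1).symm
  rw [slope_eval _ 0 1 0 (by rw [e0]; simp [frV]) (by rw [e1]; simp [frV]) (by rw [e2]; simp),
      slope_eval _ 0 1 1 (by rw [hF2 0, e0]; simp [frV]) (by rw [hF2 1, e1]; simp [frV])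
        (by rw [hF2 2, e2]; simp [frV])] at key
  norm_num at key

lemma hn2_inv (x y : ℂ) (h : HasHNType (repA3 x y) [![0,1,0], ![1,0,0], ![0,0,1]]) :
    x = 0 := by
  obtain ⟨F, hsub, hmono, h0, htop, hstep, hdec⟩ := h
  have hq : ∀ i, Module.finrank ℂ (F 1 i) = Module.finrank ℂ (F 0 i) + ![0,1,0] i :=
    (hstep ⟨0, by norm_num⟩).2
  have hF0 : ∀ i, Module.finrank ℂ (F 0 i) = 0 := by
    intro i; rw [congrFun h0 i]; exact fr_bot
  have r0 : Module.finrank ℂ (F 1 0) = 0 := by rw [hq 0, hF0 0]; rfl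
  have r1 : Module.finrank ℂ (F 1 1) = 1 := by rw [hq 1, hF0 1]; rfl
  have r2 : Module.finrank ℂ (F 1 2) = 0 := by rw [hq 2, hF0 2]; rfl
  have e0 : F 1 0 = ⊥ := fr_eq_zero _ r0
  have e1 : F 1 1 = ⊤ := fr_eq_one _ r1
  have e2 : F 1 2 = ⊥ := fr_eq_zero _ r2
  have hs := ((isSubrep_iff x y (F 1)).mp (hsub 1)).2
  rw [e1, e2] at hs
  exact eq_zero_of_map_le_bot x hs

lemma slv100 : slopeVec ΘA3 ![1,0,0] = 2 := by
  rw [slope_eval _ 1 0 0 rfl rfl rfl]; norm_num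
lemma slv010 : slopeVec ΘA3 ![0,1,0] = 3 := by
  rw [slope_eval _ 0 1 0 rfl rfl rfl]; norm_num
lemma slv001 : slopeVec ΘA3 ![0,0,1] = 0 := by
  rw [slope_eval _ 0 0 1 rfl rfl rfl]; norm_num

lemma fr_botV (x y : ℂ) (i : Fin 3) :
    Module.finrank ℂ (⊥ : Submodule ℂ ((repA3 x y).V i)) = 0 := fr_bot

lemma isSubrep00 (U : ∀ i, Submodule ℂ ((repA3 (0:ℂ) (0:ℂ)).V i)) :
    IsSubrep (repA3 0 0) U := by
  intro a
  fin_cases a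
  · exact map_zero_smul (U 0) (U 1)
  · exact map_zero_smul (U 1) (U 2)

lemma uniq00 (L : List (Fin 3 → ℕ)) (h : HasHNType (repA3 0 0) L) :
    L = [![0,1,0], ![1,0,0], ![0,0,1]] := by
  obtain ⟨F, hsub, hmono, h0, htop, hstep, hdec⟩ := h
  have hfr : ∀ (n : ℕ) (i : Fin 3), Module.finrank ℂ (F n i) = 0 ∨
      Module.finrank ℂ (F n i) = 1 := by
    intro n i
    rcases sub_cc (F n i) with hb | hb <;> rw [hb]
    · exact Or.inl fr_bot
    · exact Or.inr fr_top
  have unit : ∀ m : Fin L.length,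
      L.get m = ![1,0,0] ∨ L.get m = ![0,1,0] ∨ L.get m = ![0,0,1] := by
    intro m
    have hq : ∀ i, Module.finrank ℂ (F ((m:ℕ)+1) i) =
        Module.finrank ℂ (F (m:ℕ) i) + L.get m i := (hstep m).2
    have hne : F (m:ℕ) ≠ F ((m:ℕ)+1) := (hstep m).1.1
    have hv : ∀ i, L.get m i = 0 ∨ L.get m i = 1 := by
      intro i
      have q := hq i
      rcases hfr (m:ℕ) i with h1 | h1 <;> rcases hfr ((m:ℕ)+1) i with h2 | h2 <;>
        rw [h1, h2] at q <;> omega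
    have hex : ∃ i, L.get m i = 1 := by
      by_contra hc
      push_neg at hc
      apply hne
      funext i
      have hz : L.get m i = 0 := by
        rcases hv i with h | h
        · exact h
        · exact absurd h (hc i)
      have q := hq i
      rw [hz] at q
      rcases sub_cc (F (m:ℕ) i) with hb | hb <;>
        rcases sub_cc (F ((m:ℕ)+1) i) with hb' | hb'
      · rw [hb, hb']
      · exfalso; rw [hb, hb', fr_botV, fr_topV] at q; omega
      · exfalso; rw [hb, hb', fr_topV, fr_botV] at q; omega
      · rw [hb, hb']
    have excl : ∀ v : Fin 3, L.get m v = 1 →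
        slopeVec ΘA3 (fun i => if i = v then 1 else 0) ≤ slopeVec ΘA3 (L.get m) := by
      intro v hv1
      have step := (hstep m).1.2 (fun i => if i = v then F ((m:ℕ)+1) i else F (m:ℕ) i)
        (isSubrep00 _) ?_ ?_ ?_
      · have el : slopeVec ΘA3 (fun i => Module.finrank ℂ
            ((fun i => if i = v then F ((m:ℕ)+1) i else F (m:ℕ) i) i) -
            Module.finrank ℂ (F (m:ℕ) i)) =
            slopeVec ΘA3 (fun i => if i = v then 1 else 0) := by
          apply slope_congr
          intro i
          dsimp only
          by_cases hiv : i = v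
          · beta_reduce; rw [if_pos hiv, if_pos hiv, hiv, hq v, hv1]
            exact Nat.add_sub_cancel_left _ _
          · beta_reduce; rw [if_neg hiv, if_neg hiv]
            omega
        have er : slopeVec ΘA3 (fun i => Module.finrank ℂ (F ((m:ℕ)+1) i) -
            Module.finrank ℂ (F (m:ℕ) i)) = slopeVec ΘA3 (L.get m) := by
          apply slope_congr
          intro i
          rw [hq i]
          omega
        rw [el, er] at step
        exact step
      · intro i
        dsimp only
        by_cases hiv : i = v
        · rw [if_pos hiv]
          exact hmono (m:ℕ) i
        · rw [if_neg hiv]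
      · intro i
        dsimp only
        by_cases hiv : i = v
        · rw [if_pos hiv]
        · rw [if_neg hiv]
          exact hmono (m:ℕ) i
      · intro hc
        have hcv : F ((m:ℕ)+1) v = F (m:ℕ) v := by simpa using congrFun hc v
        have := hq v
        rw [hcv, hv1] at this
        omega
    obtain ⟨i0, hi0⟩ := hex
    rcases hv 0 with e0 | e0 <;> rcases hv 1 with e1 | e1 <;> rcases hv 2 with e2 | e2
    · exfalso; fin_cases i0 <;> simp_all
    · refine Or.inr (Or.inr ?_)
      funext i; fin_cases i <;> simp [e0, e1, e2]
    · refine Or.inr (Or.inl ?_)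
      funext i; fin_cases i <;> simp [e0, e1, e2]
    · exfalso
      have := excl 1 e1
      rw [slope_eval _ 0 1 0 (by simp) (by simp) (by simp),
        slope_eval _ 0 1 1 e0 e1 e2] at this
      norm_num at this
    · exact Or.inl (funext fun i => by fin_cases i <;> simp [e0, e1, e2])
    · exfalso
      have := excl 0 e0
      rw [slope_eval _ 1 0 0 (by simp) (by simp) (by simp),
        slope_eval _ 1 0 1 e0 e1 e2] at this
      norm_num at this
    · exfalso
      have := excl 1 e1
      rw [slope_eval _ 0 1 0 (by simp) (by simp) (by simp),
        slope_eval _ 1 1 0 e0 e1 e2] at this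
      norm_num at this
    · exfalso
      have := excl 1 e1
      rw [slope_eval _ 0 1 0 (by simp) (by simp) (by simp),
        slope_eval _ 1 1 1 e0 e1 e2] at this
      norm_num at this
  have hsum : ∀ m : Fin L.length, L.get m 0 + L.get m 1 + L.get m 2 = 1 := by
    intro m
    rcases unit m with h | h | h <;> rw [h] <;> rfl
  have hN : ∀ n, n ≤ L.length → Module.finrank ℂ (F n 0) + Module.finrank ℂ (F n 1) +
      Module.finrank ℂ (F n 2) = n := by
    intro n
    induction n with
    | zero =>
      intro _
      rw [congrFun h0 0, congrFun h0 1, congrFun h0 2, fr_botV]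
    | succ n ih =>
      intro hn
      have hlt : n < L.length := hn
      have hq : ∀ i, Module.finrank ℂ (F (n+1) i) =
          Module.finrank ℂ (F n i) + L.get ⟨n, hlt⟩ i := (hstep ⟨n, hlt⟩).2
      have hu : L.get ⟨n, hlt⟩ 0 + L.get ⟨n, hlt⟩ 1 + L.get ⟨n, hlt⟩ 2 = 1 := hsum ⟨n, hlt⟩
      have := ih (le_of_lt hlt)
      rw [hq 0, hq 1, hq 2]
      omega
  have hlen : L.length = 3 := by
    have := hN L.length le_rfl
    rw [congrFun htop 0, congrFun htop 1, congrFun htop 2, fr_topV] at this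
    omega
  obtain ⟨A, B, C, rfl⟩ := List.length_eq_three.mp hlen
  have hA : A = ![1,0,0] ∨ A = ![0,1,0] ∨ A = ![0,0,1] := unit ⟨0, by omega⟩
  have hB : B = ![1,0,0] ∨ B = ![0,1,0] ∨ B = ![0,0,1] := unit ⟨1, by omega⟩
  have hC : C = ![1,0,0] ∨ C = ![0,1,0] ∨ C = ![0,0,1] := unit ⟨2, by omega⟩
  have d01 : slopeVec ΘA3 A > slopeVec ΘA3 B :=
    hdec ⟨0, by omega⟩ ⟨1, by omega⟩ (Fin.mk_lt_mk.mpr (by omega))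
  have d12 : slopeVec ΘA3 B > slopeVec ΘA3 C :=
    hdec ⟨1, by omega⟩ ⟨2, by omega⟩ (Fin.mk_lt_mk.mpr (by omega))
  rcases hA with rfl | rfl | rfl <;> rcases hB with rfl | rfl | rfl <;>
    rcases hC with rfl | rfl | rfl <;>
    first
      | rfl
      | (exfalso
         simp only [slv100, slv010, slv001] at d01 d12 <;>
         linarith)


/-- For the quiver `i → j → k`, `d = i + j + k`, `Θ = 2i^* + 3j^*`
(so `μ(i)=2, μ(j)=3, μ(k)=0, μ(j+k)=3/2`), identifying `R_d ≅ ℂ²`: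
the HN stratum of type `(i, j+k)` is `ℂ^* × {0}`, the HN stratum of type
`(j, i, k)` is `{0} × ℂ`; consequently the closure of the stratum of type
`(i, j+k)` is `ℂ × {0}`, which is not a union of HN strata, but is contained
in the union of the two strata above. -/
theorem stmt19 :
    {p : ℂ × ℂ | HasHNType (repA3 p.1 p.2) [![1,0,0], ![0,1,1]]} =
      {p : ℂ × ℂ | p.1 ≠ 0 ∧ p.2 = 0} ∧
    {p : ℂ × ℂ | HasHNType (repA3 p.1 p.2) [![0,1,0], ![1,0,0], ![0,0,1]]} =
      {p : ℂ × ℂ | p.1 = 0} ∧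
    closure {p : ℂ × ℂ | HasHNType (repA3 p.1 p.2) [![1,0,0], ![0,1,1]]} =
      {p : ℂ × ℂ | p.2 = 0} ∧
    ¬ (∃ T : Set (List (Fin 3 → ℕ)),
        {p : ℂ × ℂ | p.2 = 0} =
          {p : ℂ × ℂ | ∃ L ∈ T, HasHNType (repA3 p.1 p.2) L}) ∧
    {p : ℂ × ℂ | p.2 = 0} ⊆
      {p : ℂ × ℂ | HasHNType (repA3 p.1 p.2) [![1,0,0], ![0,1,1]]} ∪
      {p : ℂ × ℂ | HasHNType (repA3 p.1 p.2) [![0,1,0], ![1,0,0], ![0,0,1]]} := by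
  have h1 : {p : ℂ × ℂ | HasHNType (repA3 p.1 p.2) [![1,0,0], ![0,1,1]]} =
      {p : ℂ × ℂ | p.1 ≠ 0 ∧ p.2 = 0} := by
    ext p
    simp only [Set.mem_setOf_eq]
    constructor
    · exact hn1_inv p.1 p.2
    · rintro ⟨hx, hy⟩
      rw [hy]
      exact hn1_of p.1 hx
  have h2 : {p : ℂ × ℂ | HasHNType (repA3 p.1 p.2) [![0,1,0], ![1,0,0], ![0,0,1]]} =
      {p : ℂ × ℂ | p.1 = 0} := by
    ext p
    simp only [Set.mem_setOf_eq]
    constructor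
    · exact hn2_inv p.1 p.2
    · intro hx
      rw [hx]
      exact hn2_of p.2
  have h3 : closure {p : ℂ × ℂ | HasHNType (repA3 p.1 p.2) [![1,0,0], ![0,1,1]]} =
      {p : ℂ × ℂ | p.2 = 0} := by
    rw [h1]
    have hset : {p : ℂ × ℂ | p.1 ≠ 0 ∧ p.2 = 0} = ({0}ᶜ : Set ℂ) ×ˢ ({0} : Set ℂ) := by
      ext ⟨a, b⟩
      simp [Set.mem_prod]
    rw [hset, closure_prod_eq, (dense_compl_singleton (0:ℂ)).closure_eq, closure_singleton]
    ext ⟨a, b⟩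
    simp [eq_comm]
  refine ⟨h1, h2, h3, ?_, ?_⟩
  · rintro ⟨T, hT⟩
    have h00 : ((0,0) : ℂ × ℂ) ∈ {p : ℂ × ℂ | p.2 = 0} := rfl
    rw [hT] at h00
    obtain ⟨L, hLT, hHN⟩ := h00
    have hL : L = [![0,1,0], ![1,0,0], ![0,0,1]] := uniq00 L hHN
    subst hL
    have h01 : ((0,1) : ℂ × ℂ) ∈ {p : ℂ × ℂ | ∃ L ∈ T, HasHNType (repA3 p.1 p.2) L} :=
      ⟨_, hLT, hn2_of 1⟩
    rw [← hT] at h01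
    exact one_ne_zero h01
  · intro p hp
    by_cases hx : p.1 = 0
    · right
      rw [h2]
      exact hx
    · left
      rw [h1]
      exact ⟨hx, hp⟩
end
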